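/- arXiv:1203.4193 — 6 statements merged into one kernel-verified Lean document; each statement's English description precedes it below -/
import Mathlib

section
/- Let n be an integer and let a, b : ℤ → ℂ be two-sided sequences with ‖a‖_{n+2} + ‖a‖_{n-2} < ∞ and ‖b‖_{n+2} + ‖b‖_{n-2} < ∞, so that the product coefficients c_l := Σ_{j∈ℤ} a_j b_{l-j} are well defined. Then the nonnegative truncation satisfies ‖[c]₊‖_{n-1} ≤ 5 · (‖a‖_{n+2} + ‖a‖_{n-2}) · (‖b‖_{n+2} + ‖b‖_{n-2}). -/
/-!
Write `γ j = |Γ(j + 1/2)|`. Everything rests on the kernel bound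
`γ j * γ k ≤ √π * e^(|j| + |k|) * γ (j + k)` for `j + k ≥ 0`. For `j, k ≥ 0` it follows by
induction from `Γ(x + 1) = x Γ(x)`; for `j = -m < 0` the reflection formula turns it into
`√π Γ(l + m + 1/2) ≤ 2^l 4^m Γ(l + 1/2) Γ(m + 1/2)`, a Pascal-type double induction.

Put `x_j = |a_j| e^(n j + 2|j|) / γ j`; since `e^(n j + 2|j|)` is `e^((n + 2) j)` or
`e^((n - 2) j)` according to the sign of `j`, `‖x‖₂ ≤ ‖a‖_{n+2} + ‖a‖_{n-2}`, and likewise `y` for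
`b`. The kernel bound gives `|c_l| e^((n-1) l) / γ l ≤ √π Σ_j e^(-|j|) x_j y_(l-j)` for `l ≥ 0`,
and Cauchy–Schwarz with the weights `e^(-|j|)`, whose sum is at most `4`, gives
`‖[c]₊‖²_{n-1} ≤ 4π ‖x‖₂² ‖y‖₂² ≤ 25 ‖x‖₂² ‖y‖₂²`.
-/

open scoped ENNReal

/-- The weighted ℓ²-norm `‖a‖ₙ = (Σ_{j∈ℤ} |a_j|² e^{2nj} / |Γ(j+1/2)|²)^{1/2} ∈ [0,∞]`
of a two-sided sequence `a : ℤ → ℂ`. -/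
noncomputable def wnorm (n : ℤ) (a : ℤ → ℂ) : ℝ≥0∞ :=
  (∑' j : ℤ, ENNReal.ofReal
      (‖a j‖ ^ 2 * Real.exp (2 * n * j) / ‖Complex.Gamma ((j : ℂ) + 1 / 2)‖ ^ 2)) ^ (1 / 2 : ℝ)

/-- The nonnegative truncation `[c]₊` of a two-sided sequence. -/
noncomputable def posTrunc (c : ℤ → ℂ) : ℤ → ℂ := fun l => if 0 ≤ l then c l else 0

open Real

namespace Real

lemma Gamma_natCast_add_half_pos (m : ℕ) : 0 < Gamma (m + 1 / 2) :=
  Gamma_pos_of_pos (by positivity)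

lemma Gamma_natCast_succ_add_half (m : ℕ) :
    Gamma ((m + 1 : ℕ) + 1 / 2) = (m + 1 / 2) * Gamma (m + 1 / 2) := by
  rw [Nat.cast_succ, add_right_comm, Gamma_add_one (by positivity)]

lemma Gamma_natCast_add_half_mul_le (j k : ℕ) :
    Gamma (j + 1 / 2) * Gamma (k + 1 / 2) ≤ √π * Gamma ((j + k : ℕ) + 1 / 2) := by
  induction k with
  | zero => simp [-one_div, Gamma_one_half_eq, mul_comm]
  | succ k ih =>
    rw [← add_assoc, Gamma_natCast_succ_add_half, Gamma_natCast_succ_add_half]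
    have hk : (k : ℝ) + 1 / 2 ≤ (j + k : ℕ) + 1 / 2 := by
      push_cast; linarith [j.cast_nonneg (α := ℝ)]
    calc Gamma (j + 1 / 2) * ((k + 1 / 2) * Gamma (k + 1 / 2))
        = (k + 1 / 2) * (Gamma (j + 1 / 2) * Gamma (k + 1 / 2)) := by ring
      _ ≤ ((j + k : ℕ) + 1 / 2) * (√π * Gamma ((j + k : ℕ) + 1 / 2)) := by
        gcongr
      _ = √π * (((j + k : ℕ) + 1 / 2) * Gamma ((j + k : ℕ) + 1 / 2)) := by ring

lemma sqrt_pi_mul_Gamma_natCast_add_half_le (l m : ℕ) :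
    √π * Gamma ((l + m : ℕ) + 1 / 2) ≤
      2 ^ l * 4 ^ m * (Gamma (l + 1 / 2) * Gamma (m + 1 / 2)) := by
  induction l generalizing m with
  | zero =>
    rw [zero_add, Nat.cast_zero, zero_add, Gamma_one_half_eq, pow_zero, one_mul, mul_comm (√π)]
    exact le_mul_of_one_le_left (by positivity) (one_le_pow₀ (by norm_num))
  | succ l ihl =>
    induction m with
    | zero =>
      rw [add_zero, Nat.cast_zero, zero_add, Gamma_one_half_eq, pow_zero, mul_one, mul_comm (√π)]
      exact le_mul_of_one_le_left (by positivity) (one_le_pow₀ (by norm_num))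
    | succ m ihm =>
      set G : ℕ → ℝ := fun k => Gamma (k + 1 / 2)
      have hpos (k : ℕ) : 0 ≤ G k := (Gamma_natCast_add_half_pos k).le
      have hsucc (k : ℕ) : G (k + 1) = (k + 1 / 2) * G k := Gamma_natCast_succ_add_half k
      -- `l + m + 3/2 = (l + 1/2) + (m + 1)` splits the left side along the two predecessors.
      have hsplit :
          G (l + 1 + (m + 1)) = (l + 1 / 2) * G (l + (m + 1)) + (m + 1) * G (l + 1 + m) := by
        rw [show l + 1 + (m + 1) = l + (m + 1) + 1 by omega, hsucc,
          show l + 1 + m = l + (m + 1) by omega]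
        push_cast; ring
      have hm : (m + 1 : ℝ) * G m ≤ 2 * G (m + 1) := by
        rw [hsucc]; nlinarith [hpos m]
      calc √π * G (l + 1 + (m + 1))
          = (l + 1 / 2) * (√π * G (l + (m + 1))) + (m + 1) * (√π * G (l + 1 + m)) := by
            rw [hsplit]; ring
        _ ≤ (l + 1 / 2) * (2 ^ l * 4 ^ (m + 1) * (G l * G (m + 1))) +
            (m + 1) * (2 ^ (l + 1) * 4 ^ m * (G (l + 1) * G m)) := by
            gcongr ?_ * ?_ + ?_ * ?_
            exact ihl (m + 1)
        _ = 2 ^ l * 4 ^ (m + 1) * (G (l + 1) * G (m + 1)) +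
            2 ^ (l + 1) * 4 ^ m * G (l + 1) * ((m + 1) * G m) := by
            rw [hsucc l]; ring
        _ ≤ 2 ^ l * 4 ^ (m + 1) * (G (l + 1) * G (m + 1)) +
            2 ^ (l + 1) * 4 ^ m * G (l + 1) * (2 * G (m + 1)) := by
            gcongr
        _ = 2 ^ (l + 1) * 4 ^ (m + 1) * (G (l + 1) * G (m + 1)) := by ring

lemma abs_Gamma_half_sub_natCast_mul (m : ℕ) : |Gamma (1 / 2 - m)| * Gamma (m + 1 / 2) = π := by
  have hsin : sin (π * (m + 1 / 2)) = (-1) ^ m := by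
    rw [mul_add, mul_comm π, add_comm, sin_add_nat_mul_pi, mul_one_div, sin_pi_div_two, mul_one]
  have h := Gamma_mul_Gamma_one_sub (m + 1 / 2)
  rw [hsin, show 1 - ((m : ℝ) + 1 / 2) = 1 / 2 - m by ring] at h
  have := congrArg abs h
  rwa [abs_mul, abs_div, abs_pow, abs_neg, abs_one, one_pow, div_one, abs_of_pos pi_pos,
    abs_of_pos (Gamma_natCast_add_half_pos m), mul_comm] at this

lemma two_pow_le_exp (k : ℕ) : (2 : ℝ) ^ k ≤ exp k := by
  rw [← exp_one_pow]
  gcongr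
  linarith [add_one_le_exp 1]

end Real

noncomputable def gammaHalf (j : ℤ) : ℝ := |Real.Gamma (j + 1 / 2)|

lemma gammaHalf_pos (j : ℤ) : 0 < gammaHalf j := by
  refine abs_pos.mpr (Real.Gamma_ne_zero fun m hm => ?_)
  have : (2 * j + 1 : ℤ) = -(2 * m : ℤ) := by
    exact_mod_cast (by linarith : (2 * j + 1 : ℝ) = -(2 * m))
  omega

lemma gammaHalf_natCast (m : ℕ) : gammaHalf m = Real.Gamma (m + 1 / 2) := by
  rw [gammaHalf, Int.cast_natCast, abs_of_pos (Real.Gamma_natCast_add_half_pos m)]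

lemma gammaHalf_neg_natCast_mul (m : ℕ) : gammaHalf (-m) * Real.Gamma (m + 1 / 2) = π := by
  rw [gammaHalf, Int.cast_neg, Int.cast_natCast, neg_add_eq_sub,
    Real.abs_Gamma_half_sub_natCast_mul]

lemma gammaHalf_neg_natCast_mul_le (l m : ℕ) :
    gammaHalf (-m) * gammaHalf (l + m) ≤ √π * exp (l + 2 * m) * gammaHalf l := by
  have hm := Real.Gamma_natCast_add_half_pos m
  have hexp : (2 : ℝ) ^ l * 4 ^ m ≤ exp (l + 2 * m) := calc
    (2 : ℝ) ^ l * 4 ^ m = 2 ^ (l + 2 * m) := by rw [pow_add, pow_mul]; norm_num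
    _ ≤ exp (l + 2 * m) := mod_cast Real.two_pow_le_exp (l + 2 * m)
  refine le_of_mul_le_mul_right ?_ hm
  rw [← Nat.cast_add, gammaHalf_natCast, gammaHalf_natCast]
  calc gammaHalf (-m) * Real.Gamma ((l + m : ℕ) + 1 / 2) * Real.Gamma (m + 1 / 2)
      = √π * (√π * Real.Gamma ((l + m : ℕ) + 1 / 2)) := by
        rw [mul_right_comm, gammaHalf_neg_natCast_mul, ← mul_assoc, Real.mul_self_sqrt pi_pos.le]
    _ ≤ √π * (2 ^ l * 4 ^ m * (Real.Gamma (l + 1 / 2) * Real.Gamma (m + 1 / 2))) :=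
        mul_le_mul_of_nonneg_left (Real.sqrt_pi_mul_Gamma_natCast_add_half_le l m) (sqrt_nonneg _)
    _ ≤ √π * exp (l + 2 * m) * Real.Gamma (l + 1 / 2) * Real.Gamma (m + 1 / 2) := by
        have := Real.Gamma_natCast_add_half_pos l
        rw [mul_assoc (√π * _), mul_assoc √π]
        gcongr

lemma gammaHalf_mul_le (j k : ℤ) (h : 0 ≤ j + k) :
    gammaHalf j * gammaHalf k ≤ √π * exp (|(j : ℝ)| + |(k : ℝ)|) * gammaHalf (j + k) := by
  wlog hjk : j ≤ k generalizing j k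
  · simpa only [mul_comm (gammaHalf j), add_comm |(j : ℝ)|, add_comm j] using
      this k j (by omega) (by omega)
  lift k to ℕ using (by omega)
  obtain ⟨m, rfl | rfl⟩ := Int.eq_nat_or_neg j
  · rw [← Nat.cast_add, gammaHalf_natCast, gammaHalf_natCast, gammaHalf_natCast]
    calc Real.Gamma (m + 1 / 2) * Real.Gamma (k + 1 / 2)
        ≤ √π * Real.Gamma ((m + k : ℕ) + 1 / 2) := Real.Gamma_natCast_add_half_mul_le m k
      _ ≤ √π * exp (|((m : ℤ) : ℝ)| + |((k : ℤ) : ℝ)|) *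
            Real.Gamma ((m + k : ℕ) + 1 / 2) := by
        have := Real.Gamma_natCast_add_half_pos (m + k)
        rw [mul_assoc]
        gcongr
        exact le_mul_of_one_le_left this.le (one_le_exp (by positivity))
  · obtain ⟨l, rfl⟩ : ∃ l : ℕ, k = l + m := ⟨k - m, by omega⟩
    have habs : |((-(m : ℤ) : ℤ) : ℝ)| + |(((l + m : ℕ) : ℤ) : ℝ)| = l + 2 * m := by
      push_cast
      rw [abs_neg, abs_of_nonneg (by positivity), abs_of_nonneg (by positivity)]
      ring
    rw [habs, show -(m : ℤ) + ((l + m : ℕ) : ℤ) = l by push_cast; ring, Nat.cast_add]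
    exact gammaHalf_neg_natCast_mul_le l m

namespace ENNReal

variable {ι : Type*}

lemma tsum_mul_sq_le (w f : ι → ℝ≥0∞) :
    (∑' i, w i * f i) ^ 2 ≤ (∑' i, w i) * ∑' i, w i * f i ^ 2 := by
  have hfin (s : Finset ι) :
      (∑ i ∈ s, w i * f i) ^ 2 ≤ (∑ i ∈ s, w i) * ∑ i ∈ s, w i * f i ^ 2 := by
    have h := pow_le_pow_left' (inner_le_weight_mul_Lp_of_nonneg s one_le_two w f) 2
    simp only [rpow_ofNat] at h
    refine h.trans_eq ?_
    rw [mul_pow, ← rpow_mul_natCast, ← rpow_mul_natCast]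
    norm_num
  rw [ENNReal.tsum_eq_iSup_sum, iSup_pow_of_ne_zero two_ne_zero]
  exact iSup_le fun s =>
    (hfin s).trans (mul_le_mul' (ENNReal.sum_le_tsum s) (ENNReal.sum_le_tsum s))

lemma tsum_tsum_mul_sub {G : Type*} [AddGroup G] (f g : G → ℝ≥0∞) :
    ∑' l, ∑' j, f j * g (l - j) = (∑' j, f j) * ∑' k, g k := by
  rw [ENNReal.tsum_comm, ← ENNReal.tsum_mul_right]
  refine tsum_congr fun j => ?_
  rw [← ENNReal.tsum_mul_left]
  exact (Equiv.subRight j).tsum_eq fun k => f j * g k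

lemma ofReal_exp_neg_le_inv_two_pow {x : ℝ} {n : ℕ} (h : n ≤ x) :
    ENNReal.ofReal (exp (-x)) ≤ 2⁻¹ ^ n := by
  have he : exp (-1) ≤ 2⁻¹ := by
    rw [exp_neg]
    exact inv_anti₀ two_pos (by linarith [add_one_le_exp 1])
  calc ENNReal.ofReal (exp (-x)) ≤ ENNReal.ofReal (exp (-1) ^ n) := by
        rw [← exp_nat_mul]
        gcongr
        linarith
    _ ≤ ENNReal.ofReal (2⁻¹ ^ n) := by gcongr
    _ = 2⁻¹ ^ n := by rw [ofReal_pow (by norm_num), ofReal_inv_of_pos two_pos, ofReal_ofNat]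

lemma tsum_ofReal_exp_neg_abs_le : ∑' j : ℤ, ENNReal.ofReal (exp (-|(j : ℝ)|)) ≤ 4 := by
  rw [tsum_of_nat_of_neg_add_one ENNReal.summable ENNReal.summable]
  calc _ ≤ ∑' n : ℕ, (2⁻¹ : ℝ≥0∞) ^ n + ∑' n : ℕ, (2⁻¹ : ℝ≥0∞) ^ n := by
        gcongr with n n <;> refine ofReal_exp_neg_le_inv_two_pow ?_
        · simp
        · push_cast
          rw [abs_neg, abs_of_nonneg (by positivity)]
          linarith
    _ = 4 := by rw [ENNReal.tsum_geometric_two]; norm_num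

end ENNReal

lemma exp_div_gammaHalf_le (ν : ℝ) {l : ℤ} (hl : 0 ≤ l) (j : ℤ) :
    exp ((ν - 1) * l) / gammaHalf l ≤
      √π * exp (-|(j : ℝ)|) * (exp (ν * j + 2 * |(j : ℝ)|) / gammaHalf j) *
        (exp (ν * ↑(l - j) + 2 * |(↑(l - j) : ℝ)|) / gammaHalf (l - j)) := by
  have hkernel := gammaHalf_mul_le j (l - j) (by omega)
  rw [add_sub_cancel] at hkernel
  have hγj := gammaHalf_pos j
  have hγk := gammaHalf_pos (l - j)
  have hl' : (0 : ℝ) ≤ l := by exact_mod_cast hl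
  have hγl := gammaHalf_pos l
  rw [mul_assoc, mul_assoc, div_mul_div_comm, ← mul_div_assoc, ← mul_div_assoc,
    div_le_div_iff₀ hγl (by positivity), ← exp_add, ← exp_add, ← mul_assoc]
  calc exp ((ν - 1) * l) * gammaHalf j * gammaHalf (l - j)
      ≤ exp ((ν - 1) * l) * (√π * exp (|(j : ℝ)| + |(↑(l - j) : ℝ)|) * gammaHalf l) := by
        rw [mul_assoc]
        gcongr
    _ = √π * exp ((ν - 1) * l + (|(j : ℝ)| + |(↑(l - j) : ℝ)|)) * gammaHalf l := by
        simp only [exp_add]; ring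
    _ ≤ √π * exp (-|(j : ℝ)| +
          (ν * j + 2 * |(j : ℝ)| + (ν * ↑(l - j) + 2 * |(↑(l - j) : ℝ)|))) * gammaHalf l := by
        gcongr √π * exp ?_ * _
        push_cast
        linarith [abs_nonneg ((l : ℝ) - j)]

noncomputable def weightedCoeff (w : ℤ → ℝ) (a : ℤ → ℂ) (j : ℤ) : ℝ≥0∞ :=
  ‖a j‖ₑ * ENNReal.ofReal (exp (w j) / gammaHalf j)

lemma wnorm_sq (ν : ℤ) (a : ℤ → ℂ) :
    wnorm ν a ^ 2 = ∑' j, weightedCoeff (fun j => ν * j) a j ^ 2 := by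
  rw [wnorm, ← ENNReal.rpow_natCast, ← ENNReal.rpow_mul]
  norm_num
  refine tsum_congr fun j => ?_
  have hΓ : ‖Complex.Gamma ((j : ℂ) + 1 / 2)‖ = gammaHalf j := by
    rw [show (j : ℂ) + 1 / 2 = ((j + 1 / 2 : ℝ) : ℂ) by push_cast; ring, Complex.Gamma_ofReal,
      Complex.norm_real, Real.norm_eq_abs, gammaHalf]
  rw [weightedCoeff, ← ofReal_norm, ← ENNReal.ofReal_mul (norm_nonneg _),
    ← ENNReal.ofReal_pow (by have := gammaHalf_pos j; positivity), hΓ]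
  congr 1
  rw [show 2 * (ν : ℝ) * j = ν * j + ν * j by ring, exp_add]
  ring

lemma tsum_weightedCoeff_sq_le (n : ℤ) (a : ℤ → ℂ) :
    ∑' j, weightedCoeff (fun j => n * j + 2 * |(j : ℝ)|) a j ^ 2 ≤
      (wnorm (n + 2) a + wnorm (n - 2) a) ^ 2 := by
  have hpt (j : ℤ) : weightedCoeff (fun j => n * j + 2 * |(j : ℝ)|) a j ^ 2 ≤
      weightedCoeff (fun j => ↑(n + 2) * j) a j ^ 2 +
        weightedCoeff (fun j => ↑(n - 2) * j) a j ^ 2 := by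
    rcases le_or_gt 0 j with hj | hj
    · have hj' : (0 : ℝ) ≤ j := by exact_mod_cast hj
      refine le_self_add.trans_eq' ?_
      simp only [weightedCoeff]
      rw [abs_of_nonneg hj']
      push_cast; ring_nf
    · have hj' : (j : ℝ) < 0 := by exact_mod_cast hj
      refine le_add_self.trans_eq' ?_
      simp only [weightedCoeff]
      rw [abs_of_neg hj']
      push_cast; ring_nf
  calc _ ≤ ∑' j, (weightedCoeff (fun j => ↑(n + 2) * j) a j ^ 2 +
          weightedCoeff (fun j => ↑(n - 2) * j) a j ^ 2) := ENNReal.tsum_le_tsum hpt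
    _ = wnorm (n + 2) a ^ 2 + wnorm (n - 2) a ^ 2 := by
        rw [ENNReal.tsum_add, wnorm_sq, wnorm_sq]
    _ ≤ (wnorm (n + 2) a + wnorm (n - 2) a) ^ 2 := by
        rw [add_sq']
        exact le_self_add

section Convolution

variable (ν : ℝ) (a b c : ℤ → ℂ) (hc : ∀ l, c l = ∑' j, a j * b (l - j))
include hc

lemma weightedCoeff_conv_le {l : ℤ} (hl : 0 ≤ l) :
    weightedCoeff (fun j => (ν - 1) * j) c l ≤
      ENNReal.ofReal √π * ∑' j : ℤ, ENNReal.ofReal (exp (-|(j : ℝ)|)) *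
        (weightedCoeff (fun j => ν * j + 2 * |(j : ℝ)|) a j *
          weightedCoeff (fun j => ν * j + 2 * |(j : ℝ)|) b (l - j)) := by
  calc weightedCoeff (fun j => (ν - 1) * j) c l
      ≤ (∑' j, ‖a j‖ₑ * ‖b (l - j)‖ₑ) *
          ENNReal.ofReal (exp ((ν - 1) * l) / gammaHalf l) := by
        rw [weightedCoeff, hc]
        gcongr
        exact enorm_tsum_le_tsum_enorm.trans_eq (tsum_congr fun j => enorm_mul _ _)
    _ = ∑' j, ‖a j‖ₑ * ‖b (l - j)‖ₑ * ENNReal.ofReal (exp ((ν - 1) * l) / gammaHalf l) :=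
        ENNReal.tsum_mul_right.symm
    _ ≤ ∑' j : ℤ, ENNReal.ofReal √π * (ENNReal.ofReal (exp (-|(j : ℝ)|)) *
          (weightedCoeff (fun j => ν * j + 2 * |(j : ℝ)|) a j *
            weightedCoeff (fun j => ν * j + 2 * |(j : ℝ)|) b (l - j))) := by
        refine ENNReal.tsum_le_tsum fun j => ?_
        have := gammaHalf_pos j
        have := gammaHalf_pos (l - j)
        calc _ ≤ ‖a j‖ₑ * ‖b (l - j)‖ₑ * ENNReal.ofReal (√π * exp (-|(j : ℝ)|) *
              (exp (ν * j + 2 * |(j : ℝ)|) / gammaHalf j) *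
              (exp (ν * ↑(l - j) + 2 * |(↑(l - j) : ℝ)|) / gammaHalf (l - j))) := by
              gcongr
              exact exp_div_gammaHalf_le ν hl j
          _ = _ := by
              simp only [weightedCoeff]
              rw [ENNReal.ofReal_mul (by positivity), ENNReal.ofReal_mul (by positivity),
                ENNReal.ofReal_mul (by positivity)]
              ring
    _ = _ := ENNReal.tsum_mul_left

lemma weightedCoeff_conv_sq_le {l : ℤ} (hl : 0 ≤ l) :
    weightedCoeff (fun j => (ν - 1) * j) c l ^ 2 ≤
      ENNReal.ofReal (4 * π) * ∑' j, weightedCoeff (fun j => ν * j + 2 * |(j : ℝ)|) a j ^ 2 *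
        weightedCoeff (fun j => ν * j + 2 * |(j : ℝ)|) b (l - j) ^ 2 := by
  set κ : ℤ → ℝ≥0∞ := fun j => ENNReal.ofReal (exp (-|(j : ℝ)|))
  set z : ℤ → ℝ≥0∞ := fun j => weightedCoeff (fun j => ν * j + 2 * |(j : ℝ)|) a j *
    weightedCoeff (fun j => ν * j + 2 * |(j : ℝ)|) b (l - j)
  have hκ (j : ℤ) : κ j ≤ 1 :=
    ENNReal.ofReal_le_one.mpr (exp_le_one_iff.mpr (neg_nonpos.mpr (abs_nonneg _)))
  calc weightedCoeff (fun j => (ν - 1) * j) c l ^ 2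
      ≤ (ENNReal.ofReal √π * ∑' j, κ j * z j) ^ 2 :=
        pow_le_pow_left' (weightedCoeff_conv_le ν a b c hc hl) 2
    _ = ENNReal.ofReal π * (∑' j, κ j * z j) ^ 2 := by
        rw [mul_pow, ← ENNReal.ofReal_pow (sqrt_nonneg _), sq_sqrt pi_pos.le]
    _ ≤ ENNReal.ofReal π * ((∑' j, κ j) * ∑' j, κ j * z j ^ 2) := by
        gcongr
        exact ENNReal.tsum_mul_sq_le κ z
    _ ≤ ENNReal.ofReal π * (4 * ∑' j, z j ^ 2) := by
        gcongr
        · exact ENNReal.tsum_ofReal_exp_neg_abs_le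
        · exact mul_le_of_le_one_left' (hκ _)
    _ = _ := by
        rw [ENNReal.ofReal_mul (by norm_num), ENNReal.ofReal_ofNat]
        simp only [z, mul_pow]
        ring

lemma tsum_weightedCoeff_posTrunc_sq_le :
    ∑' l, weightedCoeff (fun j => (ν - 1) * j) (posTrunc c) l ^ 2 ≤
      ENNReal.ofReal (4 * π) *
        ((∑' j, weightedCoeff (fun j => ν * j + 2 * |(j : ℝ)|) a j ^ 2) *
          ∑' j, weightedCoeff (fun j => ν * j + 2 * |(j : ℝ)|) b j ^ 2) := by
  rw [← ENNReal.tsum_tsum_mul_sub, ← ENNReal.tsum_mul_left]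
  refine ENNReal.tsum_le_tsum fun l => ?_
  by_cases hl : 0 ≤ l
  · simpa only [weightedCoeff, posTrunc, if_pos hl] using
      weightedCoeff_conv_sq_le ν a b c hc hl
  · simp [weightedCoeff, posTrunc, hl]

end Convolution

theorem posTrunc_product_estimate_general (n : ℤ) (a b : ℤ → ℂ)
    (c : ℤ → ℂ) (hc : ∀ l : ℤ, c l = ∑' j : ℤ, a j * b (l - j)) :
    wnorm (n - 1) (posTrunc c) ≤
      5 * (wnorm (n + 2) a + wnorm (n - 2) a) * (wnorm (n + 2) b + wnorm (n - 2) b) := by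
  rw [← ENNReal.pow_le_pow_left_iff two_ne_zero, wnorm_sq]
  have h4π : ENNReal.ofReal (4 * π) ≤ 25 := by
    rw [← ENNReal.ofReal_ofNat]
    exact ENNReal.ofReal_le_ofReal (by linarith [pi_le_four])
  calc ∑' l, weightedCoeff (fun j => ↑(n - 1) * j) (posTrunc c) l ^ 2
      ≤ ENNReal.ofReal (4 * π) *
        ((∑' j, weightedCoeff (fun j => n * j + 2 * |(j : ℝ)|) a j ^ 2) *
          ∑' j, weightedCoeff (fun j => n * j + 2 * |(j : ℝ)|) b j ^ 2) := by
        simpa only [Int.cast_sub, Int.cast_one] using tsum_weightedCoeff_posTrunc_sq_le n a b c hc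
    _ ≤ 25 * ((wnorm (n + 2) a + wnorm (n - 2) a) ^ 2 *
          (wnorm (n + 2) b + wnorm (n - 2) b) ^ 2) := by
        gcongr <;> exact tsum_weightedCoeff_sq_le n _
    _ = _ := by ring

/-- If `‖a‖_{n+2} + ‖a‖_{n-2} < ∞` and `‖b‖_{n+2} + ‖b‖_{n-2} < ∞`,
and `c_l := Σ_{j∈ℤ} a_j b_{l-j}`, then
`‖[c]₊‖_{n-1} ≤ 5 · (‖a‖_{n+2} + ‖a‖_{n-2}) · (‖b‖_{n+2} + ‖b‖_{n-2})`. -/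
theorem posTrunc_product_estimate (n : ℤ) (a b : ℤ → ℂ)
    (ha : wnorm (n + 2) a + wnorm (n - 2) a < ⊤)
    (hb : wnorm (n + 2) b + wnorm (n - 2) b < ⊤)
    (c : ℤ → ℂ) (hc : ∀ l : ℤ, c l = ∑' j : ℤ, a j * b (l - j)) :
    wnorm (n - 1) (posTrunc c) ≤
      5 * (wnorm (n + 2) a + wnorm (n - 2) a) * (wnorm (n + 2) b + wnorm (n - 2) b) :=
  posTrunc_product_estimate_general n a b c hc
end

section
/- Let n be an integer and let a, b : ℤ → ℂ be two-sided sequences such that a_j = 0 for all j > 0, b_j = 0 for all j < 0, ‖a‖_{n-2} < ∞, and ‖b‖_{n+2} < ∞. Then the product coefficients c_l := Σ_{j∈ℤ} a_j b_{l-j} are well defined and satisfy both ‖[c]₊‖_{n-1} ≤ 20 · ‖a‖_{n-2} · ‖b‖_{n+2} and ‖[c]₋‖_{n+1} ≤ 20 · ‖a‖_{n-2} · ‖b‖_{n+2}. -/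
open scoped ENNReal

/-- The strictly negative truncation `[c]₋` of a two-sided sequence. -/
noncomputable def negTrunc (c : ℤ → ℂ) : ℤ → ℂ := fun l => if l < 0 then c l else 0

/-!
Write `g j = |Γ(j + 1/2)|`. Iterating `Γ(s + 1) = s Γ(s)` gives `g j * g k ≤ √π e^{2k} g (j + k)`
for `j ≤ 0 ≤ k`, hence the weight bound `w_T (j + k) ≤ π e^{2j} w_{n-2} j * w_{n+2} k`, valid for
`T = n - 1` always and for `T = n + 1` when `j + k < 0`. Cauchy–Schwarz against this kernel (a Schur
test) bounds `‖[c]±‖²` by `(Σ_{j ≤ 0} π e^{2j}) ‖a‖² ‖b‖² ≤ 8 ‖a‖² ‖b‖²`, and finiteness of the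
`T = n - 1` bound at each `l` gives the absolute convergence of the products.
-/

open Real MeasureTheory
open scoped Nat

theorem ENNReal.tsum_sq_mul_le_tsum_mul_tsum {ι : Type*} {r f g : ι → ℝ≥0∞} {c : ℝ≥0∞}
    (h : ∀ i, r i ^ 2 * c ≤ f i * g i) : (∑' i, r i) ^ 2 * c ≤ (∑' i, f i) * ∑' i, g i := by
  let _ : MeasurableSpace ι := ⊤
  have hsq : ∀ x : ℝ≥0∞, (x ^ (1 / 2 : ℝ)) ^ 2 = x := fun x => by
    simpa using ENNReal.rpow_inv_natCast_pow two_ne_zero x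
  have hsq' : ∀ x : ℝ≥0∞, (x ^ (1 / 2 : ℝ)) ^ (2 : ℝ) = x := fun x => by
    rw [← hsq x, ENNReal.rpow_two, hsq]
  have hpt : ∀ i, r i * c ^ (1 / 2 : ℝ) ≤ f i ^ (1 / 2 : ℝ) * g i ^ (1 / 2 : ℝ) := fun i => by
    rw [← ENNReal.pow_le_pow_left_iff two_ne_zero, mul_pow, mul_pow, hsq, hsq, hsq]
    exact h i
  have hHolder := ENNReal.lintegral_mul_le_Lp_mul_Lq Measure.count Real.HolderConjugate.two_two
    (f := fun i => f i ^ (1 / 2 : ℝ)) (g := fun i => g i ^ (1 / 2 : ℝ))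
    (Measurable.of_discrete).aemeasurable (Measurable.of_discrete).aemeasurable
  simp only [Pi.mul_apply, lintegral_count, hsq'] at hHolder
  rw [← ENNReal.pow_le_pow_left_iff two_ne_zero] at hHolder
  calc (∑' i, r i) ^ 2 * c = (∑' i, r i * c ^ (1 / 2 : ℝ)) ^ 2 := by
        rw [ENNReal.tsum_mul_right, mul_pow, hsq]
    _ ≤ (∑' i, f i ^ (1 / 2 : ℝ) * g i ^ (1 / 2 : ℝ)) ^ 2 :=
        pow_le_pow_left' (ENNReal.tsum_le_tsum hpt) 2
    _ ≤ (∑' i, f i) * ∑' i, g i := by simpa only [mul_pow, hsq] using hHolder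

theorem tsum_convolution_sq_mul_le {G : Type*} [AddCommGroup G] {α β u v w K : G → ℝ≥0∞}
    (hker : ∀ j k, α j ≠ 0 → β k ≠ 0 → w (j + k) ≤ K j * u j * v k) :
    ∑' l, (∑' j, α j * β (l - j)) ^ 2 * w l ≤
      (∑' j, K j) * (∑' j, α j ^ 2 * u j) * ∑' k, β k ^ 2 * v k := by
  set A := ∑' j, α j ^ 2 * u j
  have hpointwise : ∀ l, (∑' j, α j * β (l - j)) ^ 2 * w l ≤
      A * ∑' j, K j * (β (l - j) ^ 2 * v (l - j)) := fun l =>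
    ENNReal.tsum_sq_mul_le_tsum_mul_tsum fun j => by
      by_cases hα : α j = 0
      · simp [hα]
      by_cases hβ : β (l - j) = 0
      · simp [hβ]
      calc (α j * β (l - j)) ^ 2 * w l = (α j * β (l - j)) ^ 2 * w (j + (l - j)) := by
            rw [add_sub_cancel]
        _ ≤ (α j * β (l - j)) ^ 2 * (K j * u j * v (l - j)) := by gcongr; exact hker _ _ hα hβ
        _ = α j ^ 2 * u j * (K j * (β (l - j) ^ 2 * v (l - j))) := by ring
  calc ∑' l, (∑' j, α j * β (l - j)) ^ 2 * w l
      ≤ ∑' l, A * ∑' j, K j * (β (l - j) ^ 2 * v (l - j)) := ENNReal.tsum_le_tsum hpointwise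
    _ = A * ∑' j, K j * ∑' l, β (l - j) ^ 2 * v (l - j) := by
        rw [ENNReal.tsum_mul_left, ENNReal.tsum_comm]
        simp_rw [ENNReal.tsum_mul_left]
    _ = (∑' j, K j) * A * ∑' k, β k ^ 2 * v k := by
        have hshift : ∀ j, ∑' l, β (l - j) ^ 2 * v (l - j) = ∑' k, β k ^ 2 * v k := fun j =>
          (Equiv.subRight j).tsum_eq fun k => β k ^ 2 * v k
        simp_rw [hshift, ENNReal.tsum_mul_right]
        ring

noncomputable def halfGamma (j : ℤ) : ℝ := |Gamma (j + 1 / 2)|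

lemma halfGamma_pos (j : ℤ) : 0 < halfGamma j := by
  refine abs_pos.mpr (Gamma_ne_zero fun m hm => ?_)
  have : (2 * j + 1 : ℤ) = -(2 * m) := by exact_mod_cast (by linarith : (2 * j + 1 : ℝ) = -(2 * m))
  omega

lemma norm_complexGamma_eq_halfGamma (j : ℤ) :
    ‖Complex.Gamma ((j : ℂ) + 1 / 2)‖ = halfGamma j := by
  rw [show (j : ℂ) + 1 / 2 = ((j + 1 / 2 : ℝ) : ℂ) by push_cast; ring, Complex.Gamma_ofReal,
    Complex.norm_real, Real.norm_eq_abs, halfGamma]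

lemma halfGamma_zero : halfGamma 0 = √π := by
  simp [halfGamma, -one_div, Gamma_one_half_eq]

lemma halfGamma_add_one (j : ℤ) : halfGamma (j + 1) = |(j : ℝ) + 1 / 2| * halfGamma j := by
  have hj : (j : ℝ) + 1 / 2 ≠ 0 := fun h => by
    have : (2 * j + 1 : ℤ) = 0 := by exact_mod_cast (by linarith : (2 * j + 1 : ℝ) = 0)
    omega
  rw [halfGamma, halfGamma, ← abs_mul, ← Gamma_add_one hj]
  push_cast
  ring_nf

lemma halfGamma_add_one_of_nonneg {j : ℤ} (hj : 0 ≤ j) :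
    halfGamma (j + 1) = (j + 1 / 2) * halfGamma j := by
  rw [halfGamma_add_one, abs_of_pos (by positivity)]

lemma halfGamma_of_nonpos {j : ℤ} (hj : j ≤ 0) :
    halfGamma j = (1 / 2 - j) * halfGamma (j - 1) := by
  have hj' : (j : ℝ) ≤ 0 := by exact_mod_cast hj
  have h := halfGamma_add_one (j - 1)
  rw [sub_add_cancel] at h
  rw [h, abs_of_neg (by push_cast; linarith)]
  push_cast
  ring

lemma halfGamma_sub_mul_le {i : ℤ} (hi : i ≤ 0) (k : ℕ) :
    halfGamma (i - k) * halfGamma k ≤ √π * halfGamma i := by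
  induction k with
  | zero => simp [halfGamma_zero, mul_comm]
  | succ k ih =>
    have hstep : halfGamma (i - k) = (1 / 2 - (i - k)) * halfGamma (i - (k + 1 : ℕ)) := by
      rw [halfGamma_of_nonpos (by omega)]
      push_cast
      ring_nf
    have hi' : (i : ℝ) ≤ 0 := by exact_mod_cast hi
    calc halfGamma (i - (k + 1 : ℕ)) * halfGamma (k + 1 : ℕ)
        = halfGamma (i - (k + 1 : ℕ)) * (k + 1 / 2) * halfGamma k := by
          rw [Nat.cast_succ, halfGamma_add_one_of_nonneg (by positivity)]
          push_cast
          ring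
      _ ≤ halfGamma (i - (k + 1 : ℕ)) * (1 / 2 - (i - k)) * halfGamma k := by
          gcongr
          · exact (halfGamma_pos _).le
          · exact (halfGamma_pos _).le
          · linarith
      _ = halfGamma (i - k) * halfGamma k := by rw [hstep]; ring
      _ ≤ √π * halfGamma i := ih

lemma halfGamma_neg_mul_le {m k : ℕ} (hmk : m ≤ k) :
    halfGamma (-m) * halfGamma k * m ! ≤ √π * (2 * k) ^ m * halfGamma (k - m) := by
  induction m with
  | zero => simp [halfGamma_zero, mul_comm]
  | succ m ih =>
    have hm : (m : ℝ) + 1 ≤ k := by exact_mod_cast hmk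
    have hX : halfGamma (-m) = (m + 1 / 2) * halfGamma (-(m + 1 : ℕ)) := by
      rw [halfGamma_of_nonpos (by omega)]
      push_cast
      ring_nf
    have hY : halfGamma (k - m) = (k - m - 1 / 2) * halfGamma (k - (m + 1 : ℕ)) := by
      rw [show (k : ℤ) - m = k - (m + 1 : ℕ) + 1 by push_cast; ring,
        halfGamma_add_one_of_nonneg (by omega)]
      push_cast
      ring_nf
    rw [hX, hY] at ih
    specialize ih (by omega)
    have hkey : ((m : ℝ) + 1) * (k - m - 1 / 2) ≤ (m + 1 / 2) * (2 * k) := by nlinarith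
    have hY0 := (halfGamma_pos (k - (m + 1 : ℕ))).le
    refine le_of_mul_le_mul_left ?_ (by positivity : (0 : ℝ) < m + 1 / 2)
    calc (m + 1 / 2) * (halfGamma (-(m + 1 : ℕ)) * halfGamma k * (m + 1) !)
        = (m + 1) * ((m + 1 / 2) * halfGamma (-(m + 1 : ℕ)) * halfGamma k * m !) := by
          push_cast [Nat.factorial_succ]
          ring
      _ ≤ (m + 1) * (√π * (2 * k) ^ m * ((k - m - 1 / 2) * halfGamma (k - (m + 1 : ℕ)))) := by
          gcongr
      _ = (m + 1) * (k - m - 1 / 2) * (√π * (2 * k) ^ m * halfGamma (k - (m + 1 : ℕ))) := by ring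
      _ ≤ (m + 1 / 2) * (2 * k) * (√π * (2 * k) ^ m * halfGamma (k - (m + 1 : ℕ))) := by gcongr
      _ = (m + 1 / 2) * (√π * (2 * k) ^ (m + 1) * halfGamma (k - (m + 1 : ℕ))) := by ring

lemma halfGamma_mul_le {j k : ℤ} (hj : j ≤ 0) (hk : 0 ≤ k) :
    halfGamma j * halfGamma k ≤ √π * exp (2 * k) * halfGamma (j + k) := by
  lift k to ℕ using hk
  obtain ⟨m, rfl⟩ : ∃ m : ℕ, j = -m := ⟨(-j).toNat, by omega⟩
  rcases le_or_gt m k with hmk | hkm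
  · have hexp : (2 * (k : ℝ)) ^ m ≤ m ! * exp (2 * k) := by
      have := pow_div_factorial_le_exp (2 * (k : ℝ)) (by positivity) m
      rwa [div_le_iff₀ (by positivity), mul_comm (exp _)] at this
    refine le_of_mul_le_mul_right ?_ (by positivity : (0 : ℝ) < m !)
    calc halfGamma (-m) * halfGamma k * m !
        ≤ √π * (2 * k) ^ m * halfGamma (k - m) := halfGamma_neg_mul_le hmk
      _ ≤ √π * (m ! * exp (2 * k)) * halfGamma (k - m) := by
          have := halfGamma_pos (k - m)
          gcongr
      _ = √π * exp (2 * k) * halfGamma (-m + k) * m ! := by ring_nf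
  · have h := halfGamma_sub_mul_le (by omega : -(m : ℤ) + k ≤ 0) k
    rw [add_sub_cancel_right] at h
    have := halfGamma_pos (-(m : ℤ) + k)
    calc halfGamma (-m) * halfGamma k ≤ √π * halfGamma (-m + k) := h
      _ ≤ √π * exp (2 * k) * halfGamma (-m + k) := by
          gcongr
          exact le_mul_of_one_le_right (sqrt_nonneg _) (one_le_exp (by positivity))

noncomputable def weight (n j : ℤ) : ℝ := exp (2 * n * j) / halfGamma j ^ 2

lemma weight_pos (n j : ℤ) : 0 < weight n j := by
  have := halfGamma_pos j
  unfold weight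
  positivity

lemma weight_add_le {A B T j k : ℤ} (hj : j ≤ 0) (hk : 0 ≤ k)
    (h : T * (j + k) + 2 * k ≤ (A + 1) * j + B * k) :
    weight T (j + k) ≤ π * exp (2 * j) * weight A j * weight B k := by
  have hj0 := halfGamma_pos j
  have hk0 := halfGamma_pos k
  have hjk0 := halfGamma_pos (j + k)
  have hgamma : (halfGamma j * halfGamma k) ^ 2 ≤ π * exp (4 * k) * halfGamma (j + k) ^ 2 :=
    calc (halfGamma j * halfGamma k) ^ 2 ≤ (√π * exp (2 * k) * halfGamma (j + k)) ^ 2 := by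
          gcongr ?_ ^ 2; exact halfGamma_mul_le hj hk
      _ = π * exp (4 * k) * halfGamma (j + k) ^ 2 := by
          rw [mul_pow, mul_pow, sq_sqrt pi_pos.le, ← exp_nat_mul]
          ring_nf
  have hexp : exp (2 * T * (j + k : ℤ)) * exp (4 * k) ≤
      exp (2 * j) * exp (2 * A * j) * exp (2 * B * k) := by
    have h' : (T : ℝ) * (j + k) + 2 * k ≤ (A + 1) * j + B * k := by exact_mod_cast h
    rw [← exp_add, ← exp_add, ← exp_add, exp_le_exp]
    push_cast
    linarith
  unfold weight
  field_simp
  calc exp (2 * T * (j + k : ℤ)) * halfGamma j ^ 2 * halfGamma k ^ 2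
      = exp (2 * T * (j + k : ℤ)) * (halfGamma j * halfGamma k) ^ 2 := by ring
    _ ≤ exp (2 * T * (j + k : ℤ)) * (π * exp (4 * k) * halfGamma (j + k) ^ 2) := by gcongr
    _ = π * halfGamma (j + k) ^ 2 * (exp (2 * T * (j + k : ℤ)) * exp (4 * k)) := by ring
    _ ≤ π * halfGamma (j + k) ^ 2 * (exp (2 * j) * exp (2 * A * j) * exp (2 * B * k)) := by gcongr
    _ = _ := by ring_nf

lemma wnorm_eq_tsum_weight (n : ℤ) (a : ℤ → ℂ) :
    wnorm n a = (∑' j, ‖a j‖ₑ ^ 2 * ENNReal.ofReal (weight n j)) ^ (1 / 2 : ℝ) := by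
  simp_rw [wnorm, norm_complexGamma_eq_halfGamma, mul_div_assoc, weight,
    ENNReal.ofReal_mul (sq_nonneg _), ENNReal.ofReal_pow (norm_nonneg _), ofReal_norm]

noncomputable def expKernel (j : ℤ) : ℝ≥0∞ := if j ≤ 0 then ENNReal.ofReal (π * exp (2 * j)) else 0

lemma ofReal_weight_add_le {A B T j k : ℤ} (hj : j ≤ 0) (hk : 0 ≤ k)
    (h : T * (j + k) + 2 * k ≤ (A + 1) * j + B * k) :
    ENNReal.ofReal (weight T (j + k)) ≤
      expKernel j * ENNReal.ofReal (weight A j) * ENNReal.ofReal (weight B k) := by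
  rw [expKernel, if_pos hj, ← ENNReal.ofReal_mul (by positivity),
    ← ENNReal.ofReal_mul (mul_nonneg (by positivity) (weight_pos _ _).le)]
  exact ENNReal.ofReal_le_ofReal (weight_add_le hj hk h)

lemma tsum_expKernel_le : ∑' j, expKernel j ≤ 8 := by
  have hsupp : Function.support expKernel ⊆ Set.range fun m : ℕ => -(m : ℤ) :=
    fun j hj => ⟨(-j).toNat, by
      by_cases hj0 : j ≤ 0
      · simp only; omega
      · exact absurd (if_neg hj0) hj⟩
  have hr : exp (-2) ≤ 2⁻¹ := by
    rw [exp_neg, inv_le_inv₀ (exp_pos _) two_pos]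
    linarith [add_one_le_exp 2]
  have hgeom : HasSum (fun m : ℕ => π * exp (-2) ^ m) (π * (1 - exp (-2))⁻¹) :=
    (hasSum_geometric_of_lt_one (exp_pos _).le (by linarith)).mul_left π
  rw [← (neg_injective.comp Nat.cast_injective).tsum_eq hsupp]
  calc ∑' m : ℕ, expKernel (-m)
      = ∑' m : ℕ, ENNReal.ofReal (π * exp (-2) ^ m) := by
        congr 1; ext m
        rw [expKernel, if_pos (by omega), ← exp_nat_mul]
        push_cast
        ring_nf
    _ = ENNReal.ofReal (π * (1 - exp (-2))⁻¹) := by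
        rw [← ENNReal.ofReal_tsum_of_nonneg (fun m => by positivity) hgeom.summable, hgeom.tsum_eq]
    _ ≤ ENNReal.ofReal 8 := by
        gcongr
        have hinv : (1 - exp (-2))⁻¹ ≤ 2 := by
          rw [inv_le_comm₀ (by linarith) two_pos]
          linarith
        calc π * (1 - exp (-2))⁻¹ ≤ 4 * 2 :=
              mul_le_mul pi_le_four hinv (inv_nonneg.mpr (by linarith)) (by norm_num)
          _ = 8 := by norm_num
    _ = 8 := by norm_num

section Convolution

variable {n T : ℤ} {a b : ℤ → ℂ}

lemma tsum_convolution_sq_weight_le (P : ℤ → Prop) [DecidablePred P]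
    (ha0 : ∀ j, 0 < j → a j = 0) (hb0 : ∀ k, k < 0 → b k = 0)
    (hT : ∀ j k, j ≤ 0 → 0 ≤ k → P (j + k) → T * (j + k) + 2 * k ≤ (n - 1) * j + (n + 2) * k) :
    ∑' l, (∑' j, ‖a j‖ₑ * ‖b (l - j)‖ₑ) ^ 2 * (if P l then ENNReal.ofReal (weight T l) else 0) ≤
      8 * (∑' j, ‖a j‖ₑ ^ 2 * ENNReal.ofReal (weight (n - 2) j)) *
        ∑' k, ‖b k‖ₑ ^ 2 * ENNReal.ofReal (weight (n + 2) k) := by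
  calc _ ≤ (∑' j, expKernel j) * (∑' j, ‖a j‖ₑ ^ 2 * ENNReal.ofReal (weight (n - 2) j)) *
          ∑' k, ‖b k‖ₑ ^ 2 * ENNReal.ofReal (weight (n + 2) k) :=
        tsum_convolution_sq_mul_le fun j k hα hβ => ?_
    _ ≤ _ := by gcongr; exact tsum_expKernel_le
  have hj : j ≤ 0 := not_lt.1 fun h => hα (by simp [ha0 j h])
  have hk : 0 ≤ k := not_lt.1 fun h => hβ (by simp [hb0 k h])
  split_ifs with hP
  · exact ofReal_weight_add_le hj hk (by linarith [hT j k hj hk hP])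
  · exact zero_le

lemma summable_norm_convolution (ha0 : ∀ j, 0 < j → a j = 0) (hb0 : ∀ k, k < 0 → b k = 0)
    (ha : wnorm (n - 2) a < ⊤) (hb : wnorm (n + 2) b < ⊤) (l : ℤ) :
    Summable fun j => ‖a j * b (l - j)‖ := by
  have h := tsum_convolution_sq_weight_le (T := n - 1) (fun _ => True) ha0 hb0
    fun _ _ _ hk _ => by linarith
  rw [wnorm_eq_tsum_weight, ENNReal.rpow_lt_top_iff_of_pos (by norm_num)] at ha hb
  have hl := ENNReal.ne_top_of_tsum_ne_top (h.trans_lt (by finiteness)).ne l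
  rw [← tsum_enorm_ne_top_iff_summable_norm]
  simp_rw [enorm_mul]
  intro htop
  simp [htop, weight_pos] at hl

lemma wnorm_truncated_convolution_le (P : ℤ → Prop) [DecidablePred P] {c : ℤ → ℂ}
    (ha0 : ∀ j, 0 < j → a j = 0) (hb0 : ∀ k, k < 0 → b k = 0)
    (hc : ∀ l, c l = ∑' j, a j * b (l - j))
    (hT : ∀ j k, j ≤ 0 → 0 ≤ k → P (j + k) → T * (j + k) + 2 * k ≤ (n - 1) * j + (n + 2) * k) :
    wnorm T (fun l => if P l then c l else 0) ≤ 20 * wnorm (n - 2) a * wnorm (n + 2) b := by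
  have hc' : ∀ l, ‖c l‖ₑ ≤ ∑' j, ‖a j‖ₑ * ‖b (l - j)‖ₑ := fun l => by
    simpa only [hc, enorm_mul] using enorm_tsum_le_tsum_enorm (f := fun j => a j * b (l - j))
  set A := ∑' j, ‖a j‖ₑ ^ 2 * ENNReal.ofReal (weight (n - 2) j)
  set B := ∑' k, ‖b k‖ₑ ^ 2 * ENNReal.ofReal (weight (n + 2) k)
  have hsq : ∑' l, ‖if P l then c l else 0‖ₑ ^ 2 * ENNReal.ofReal (weight T l) ≤ 20 ^ 2 * A * B :=
    calc ∑' l, ‖if P l then c l else 0‖ₑ ^ 2 * ENNReal.ofReal (weight T l)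
        = ∑' l, ‖c l‖ₑ ^ 2 * (if P l then ENNReal.ofReal (weight T l) else 0) := by
          congr 1; ext l; split_ifs <;> simp
      _ ≤ ∑' l, (∑' j, ‖a j‖ₑ * ‖b (l - j)‖ₑ) ^ 2 *
            (if P l then ENNReal.ofReal (weight T l) else 0) := by
          gcongr with l; exact hc' l
      _ ≤ 8 * A * B := tsum_convolution_sq_weight_le P ha0 hb0 hT
      _ ≤ 20 ^ 2 * A * B := by gcongr; norm_num
  rw [wnorm_eq_tsum_weight, wnorm_eq_tsum_weight, wnorm_eq_tsum_weight]
  calc _ ≤ (20 ^ 2 * A * B) ^ (1 / 2 : ℝ) := ENNReal.rpow_le_rpow hsq (by norm_num)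
    _ = 20 * A ^ (1 / 2 : ℝ) * B ^ (1 / 2 : ℝ) := by
        rw [ENNReal.mul_rpow_of_nonneg _ _ (by norm_num),
          ENNReal.mul_rpow_of_nonneg _ _ (by norm_num), ← ENNReal.rpow_natCast, ← ENNReal.rpow_mul]
        norm_num

end Convolution

/-- If `a_j = 0` for `j > 0`, `b_j = 0` for `j < 0`,
`‖a‖_{n-2} < ∞` and `‖b‖_{n+2} < ∞`, then the product coefficients
`c_l := Σ_{j∈ℤ} a_j b_{l-j}` are well defined and satisfy
`‖[c]₊‖_{n-1} ≤ 20 · ‖a‖_{n-2} · ‖b‖_{n+2}` and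
`‖[c]₋‖_{n+1} ≤ 20 · ‖a‖_{n-2} · ‖b‖_{n+2}`. -/
theorem negative_positive_product_estimate (n : ℤ) (a b : ℤ → ℂ)
    (ha0 : ∀ j : ℤ, 0 < j → a j = 0) (hb0 : ∀ j : ℤ, j < 0 → b j = 0)
    (ha : wnorm (n - 2) a < ⊤) (hb : wnorm (n + 2) b < ⊤)
    (c : ℤ → ℂ) (hc : ∀ l : ℤ, c l = ∑' j : ℤ, a j * b (l - j)) :
    (∀ l : ℤ, Summable (fun j : ℤ => ‖a j * b (l - j)‖)) ∧
    wnorm (n - 1) (posTrunc c) ≤ 20 * wnorm (n - 2) a * wnorm (n + 2) b ∧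
    wnorm (n + 1) (negTrunc c) ≤ 20 * wnorm (n - 2) a * wnorm (n + 2) b :=
  ⟨summable_norm_convolution ha0 hb0 ha hb,
    wnorm_truncated_convolution_le (fun l => 0 ≤ l) ha0 hb0 hc fun _ _ _ hk _ => by linarith,
    wnorm_truncated_convolution_le (fun l => l < 0) ha0 hb0 hc fun _ _ hj _ hjk => by linarith⟩
end

section
/- The set ℂ{{z,z⁻¹}} is closed under Cauchy product: if a, b : ℤ → ℂ satisfy ‖a‖ₙ < ∞ and ‖b‖ₙ < ∞ for all sufficiently large integers n, then for every l ∈ ℤ the sum c_l := Σ_{j∈ℤ} a_j b_{l-j} converges absolutely, and the resulting sequence c : ℤ → ℂ satisfies ‖c‖ₙ < ∞ for all sufficiently large integers n. -/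
open scoped ENNReal Real

namespace CPaux


noncomputable def Gr (j : ℤ) : ℝ := ‖Complex.Gamma ((j : ℂ) + 1 / 2)‖

lemma cast_half (j : ℤ) : ((j : ℂ) + 1 / 2) = (((j : ℝ) + 1 / 2 : ℝ) : ℂ) := by
  push_cast; ring

lemma half_ne (j : ℤ) : ((j : ℝ) + 1 / 2) ≠ 0 := by
  rcases le_or_gt 0 j with h | h
  · have : (0:ℝ) ≤ (j:ℝ) := by exact_mod_cast h
    positivity
  · have hj : j ≤ -1 := by omega
    have : (j:ℝ) ≤ -1 := by exact_mod_cast hj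
    nlinarith

lemma Gr_pos (j : ℤ) : 0 < Gr j := by
  rw [Gr, norm_pos_iff]
  apply Complex.Gamma_ne_zero
  intro m hm
  rw [cast_half] at hm
  have : ((j : ℝ) + 1 / 2) = -(m:ℝ) := by exact_mod_cast hm
  have h2 : (2*j + 1 : ℝ) = -(2*m:ℝ) := by linarith
  have : (2*j + 1 : ℤ) = -(2*m : ℤ) := by exact_mod_cast h2
  omega

lemma Gr_rec (j : ℤ) : Gr (j + 1) = |(j : ℝ) + 1 / 2| * Gr j := by
  have h : ((j + 1 : ℤ) : ℂ) + 1 / 2 = ((j : ℂ) + 1 / 2) + 1 := by push_cast; ring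
  have hne : ((j : ℂ) + 1 / 2) ≠ 0 := by
    rw [cast_half]
    exact_mod_cast Complex.ofReal_ne_zero.mpr (half_ne j)
  rw [Gr, h, Complex.Gamma_add_one _ hne, norm_mul, Gr, cast_half,
    Complex.norm_real, Real.norm_eq_abs]

noncomputable def P (m : ℕ) : ℝ := Gr m

lemma P_zero : P 0 = Real.sqrt π := by
  rw [P, Gr]
  rw [show (((0:ℕ):ℤ) : ℂ) + 1/2 = (((1/2 : ℝ)):ℂ) by norm_num, Complex.Gamma_ofReal,
    Real.Gamma_one_half_eq, Complex.norm_real, Real.norm_eq_abs,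
    abs_of_nonneg (Real.sqrt_nonneg _)]

lemma P_pos (m : ℕ) : 0 < P m := Gr_pos m

lemma P_sq : P 0 * P 0 = π := by
  rw [P_zero]; exact Real.mul_self_sqrt (le_of_lt Real.pi_pos)

lemma P_succ (m : ℕ) : P (m + 1) = ((m : ℝ) + 1 / 2) * P m := by
  have h := Gr_rec (m : ℤ)
  rw [show ((m:ℤ):ℝ) + 1/2 = (m:ℝ) + 1/2 by push_cast; ring,
    abs_of_nonneg (by positivity)] at h
  rw [P, P, show (((m + 1:ℕ)):ℤ) = (m : ℤ) + 1 by push_cast; ring]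
  exact h

lemma one_le_P0 : 1 ≤ P 0 := by
  rw [P_zero]
  nlinarith [Real.sq_sqrt (le_of_lt Real.pi_pos), Real.sqrt_nonneg π, Real.pi_gt_three]

lemma Gr_neg (m : ℕ) : Gr (-(m : ℤ)) = π / P m := by
  induction m with
  | zero =>
    have h0 : (-((0:ℕ):ℤ)) = ((0:ℕ):ℤ) := by norm_num
    rw [h0, show Gr ((0:ℕ):ℤ) = P 0 from rfl, eq_div_iff (ne_of_gt (P_pos 0)), P_sq]
  | succ k ih =>
    have h := Gr_rec (-(k:ℤ) - 1)
    rw [show (-(k:ℤ) - 1 + 1 : ℤ) = -(k:ℤ) by ring] at h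
    rw [show ((-(k:ℤ) - 1:ℤ):ℝ) + 1/2 = -((k:ℝ) + 1/2) by push_cast; ring, abs_neg,
      abs_of_nonneg (by positivity), ih] at h
    have hk : (0:ℝ) < (k:ℝ) + 1/2 := by positivity
    have hp := P_pos k
    rw [show (-((k+1:ℕ)):ℤ) = -(k:ℤ) - 1 by push_cast; ring, P_succ,
      eq_div_iff (by positivity)]
    rw [div_eq_iff (ne_of_gt hp)] at h
    nlinarith [h]

lemma F2 (p q : ℕ) : P p * P q ≤ P 0 * P (p + q) := by
  induction q with
  | zero => simp [mul_comm]
  | succ k ih =>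
    rw [P_succ, show p + (k+1) = (p+k) + 1 from rfl, P_succ]
    have h1 : ((k:ℝ) + 1/2) ≤ ((p:ℝ) + (k:ℝ) + 1/2) := by
      have : (0:ℝ) ≤ (p:ℝ) := Nat.cast_nonneg p
      linarith
    have hp0 := P_pos 0
    have hpk := P_pos (p+k)
    have hpp := P_pos p
    calc P p * (((k:ℝ) + 1/2) * P k) = ((k:ℝ)+1/2) * (P p * P k) := by ring
    _ ≤ ((k:ℝ)+1/2) * (P 0 * P (p+k)) := by
        apply mul_le_mul_of_nonneg_left ih (by positivity)
    _ ≤ ((p:ℝ)+(k:ℝ)+1/2) * (P 0 * P (p+k)) := by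
        apply mul_le_mul_of_nonneg_right h1 (by positivity)
    _ = P 0 * ((((p+k : ℕ):ℝ)+1/2) * P (p+k)) := by push_cast; ring

lemma lemA_le (q : ℕ) : ∀ p : ℕ, p ≤ q → P (p + q) ≤ 4 ^ (p + q) * (P p * P q) := by
  induction q with
  | zero =>
    intro p hp
    interval_cases p
    simp
    nlinarith [one_le_P0, P_pos 0]
  | succ k ih =>
    intro p hp
    rcases Nat.lt_or_ge p (k+1) with h | h
    · -- p ≤ k
      have hpk : p ≤ k := by omega
      have ihp := ih p hpk
      have h1 : P (p + (k+1)) = ((p:ℝ) + (k:ℝ) + 1/2) * P (p + k) := by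
        rw [show p + (k+1) = (p + k) + 1 from rfl, P_succ]; push_cast; ring
      have h2 : P (k+1) = ((k:ℝ) + 1/2) * P k := P_succ k
      have hppos := P_pos p
      have hkpos := P_pos k
      have hpkpos := P_pos (p+k)
      have hstep : ((p:ℝ) + (k:ℝ) + 1/2) ≤ 4 * ((k:ℝ) + 1/2) := by
        have : (p:ℝ) ≤ (k:ℝ) := by exact_mod_cast hpk
        linarith
      rw [h1, h2, show p + (k+1) = (p+k)+1 from rfl, pow_succ]
      calc ((p:ℝ) + (k:ℝ) + 1/2) * P (p + k)
          ≤ (4 * ((k:ℝ) + 1/2)) * P (p+k) := by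
            apply mul_le_mul_of_nonneg_right hstep (le_of_lt hpkpos)
        _ ≤ (4 * ((k:ℝ) + 1/2)) * (4 ^ (p+k) * (P p * P k)) := by
            apply mul_le_mul_of_nonneg_left ihp (by positivity)
        _ = 4 ^ (p+k) * 4 * (P p * (((k:ℝ)+1/2) * P k)) := by ring
    · -- p = k+1 : diagonal
      have hpe : p = k + 1 := by omega
      subst hpe
      have h1 : P ((k+1) + (k+1)) = ((2*(k:ℝ)) + 3/2) * (((2*(k:ℝ)) + 1/2) * P (k + k)) := by
        rw [show (k+1) + (k+1) = ((k + k) + 1) + 1 from by omega, P_succ, P_succ]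
        push_cast; ring
      have ihd := ih k (le_refl k)
      have hkpos := P_pos k
      have hkkpos := P_pos (k+k)
      have h2 : P (k+1) * P (k+1) = (((k:ℝ)+1/2) * ((k:ℝ)+1/2)) * (P k * P k) := by
        rw [P_succ]; ring
      rw [h1, h2, show (k+1) + (k+1) = (k + k) + 2 from by omega, pow_succ, pow_succ]
      have hs : ((2*(k:ℝ)) + 3/2) * ((2*(k:ℝ)) + 1/2) ≤ 16 * (((k:ℝ)+1/2) * ((k:ℝ)+1/2)) := by
        nlinarith [Nat.cast_nonneg (α := ℝ) k]
      calc ((2*(k:ℝ)) + 3/2) * (((2*(k:ℝ)) + 1/2) * P (k + k))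
          ≤ ((2*(k:ℝ)) + 3/2) * (((2*(k:ℝ)) + 1/2) * (4 ^ (k+k) * (P k * P k))) := by
            apply mul_le_mul_of_nonneg_left _ (by positivity)
            apply mul_le_mul_of_nonneg_left ihd (by positivity)
        _ = (((2*(k:ℝ)) + 3/2) * ((2*(k:ℝ)) + 1/2)) * (4 ^ (k+k) * (P k * P k)) := by ring
        _ ≤ (16 * (((k:ℝ)+1/2) * ((k:ℝ)+1/2))) * (4 ^ (k+k) * (P k * P k)) := by
            apply mul_le_mul_of_nonneg_right hs (by positivity)
        _ = 4 ^ (k+k) * 4 * 4 * ((((k:ℝ)+1/2) * ((k:ℝ)+1/2)) * (P k * P k)) := by ring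

lemma lemA (p q : ℕ) : P (p + q) ≤ 4 ^ (p + q) * (P p * P q) := by
  rcases le_total p q with h | h
  · exact lemA_le q p h
  · have := lemA_le p q h
    rw [Nat.add_comm q p] at this
    calc P (p + q) ≤ 4^(p+q) * (P q * P p) := this
    _ = 4^(p+q) * (P p * P q) := by ring

lemma sqrtpi_le_pi : P 0 ≤ π := by
  nlinarith [P_sq, one_le_P0]

lemma four_pow_ge_one (m : ℕ) : (1:ℝ) ≤ 4 ^ m := one_le_pow₀ (by norm_num)

lemma four_pow_pos (m : ℕ) : (0:ℝ) < 4 ^ m := by positivity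

lemma four_pow_mono {m n : ℕ} (h : m ≤ n) : (4:ℝ) ^ m ≤ 4 ^ n :=
  pow_le_pow_right₀ (by norm_num) h

lemma GKEY_nonneg (p q : ℕ) : Gr (p:ℤ) * Gr (q:ℤ) ≤ π * 4 ^ (p + q) * Gr ((p:ℤ) + (q:ℤ)) := by
  have pi_pos := Real.pi_pos
  rw [show (p:ℤ) + (q:ℤ) = ((p + q : ℕ):ℤ) by push_cast; ring]
  show P p * P q ≤ π * 4 ^ (p + q) * P (p+q)
  have h1 := F2 p q
  have h2 := P_pos (p+q)
  have h3 := sqrtpi_le_pi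
  have h4 := four_pow_ge_one (p+q)
  nlinarith [mul_le_mul_of_nonneg_right h3 h2.le,
    mul_le_mul_of_nonneg_right (four_pow_ge_one (p+q)) (mul_pos pi_pos h2).le]

lemma GKEY_mixed (p q : ℕ) : Gr (p:ℤ) * Gr (-(q:ℤ)) ≤ π * 4 ^ (p + q) * Gr ((p:ℤ) + -(q:ℤ)) := by
  have pi_pos := Real.pi_pos
  rw [Gr_neg]
  rcases le_or_gt q p with h | h
  · -- p - q ≥ 0
    rw [show (p:ℤ) + -(q:ℤ) = ((p - q : ℕ):ℤ) by omega]
    show P p * (π / P q) ≤ π * 4 ^ (p + q) * P (p - q)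
    have hA := lemA q (p - q)
    rw [show q + (p - q) = p by omega] at hA
    have hq := P_pos q
    have hpq := P_pos (p - q)
    rw [show P p * (π / P q) = (P p * π) / P q by ring, div_le_iff₀ hq]
    have h5 : π * P p ≤ π * (4 ^ p * (P q * P (p - q))) :=
      mul_le_mul_of_nonneg_left hA pi_pos.le
    have h6 : (4:ℝ) ^ p ≤ 4 ^ (p + q) := four_pow_mono (by omega)
    nlinarith [mul_le_mul_of_nonneg_right h6 (mul_pos hq hpq).le]
  · -- negative result index
    rw [show (p:ℤ) + -(q:ℤ) = -((q - p : ℕ):ℤ) by omega, Gr_neg]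
    show P p * (π / P q) ≤ π * 4 ^ (p + q) * (π / P (q - p))
    have hF := F2 p (q - p)
    rw [show p + (q - p) = q by omega] at hF
    have hq := P_pos q
    have hqp := P_pos (q - p)
    have hp := P_pos p
    rw [show P p * (π / P q) = (P p * π) / P q by ring,
      show π * 4 ^ (p + q) * (π / P (q - p)) = (π * 4 ^ (p+q) * π) / P (q - p) by ring,
      div_le_div_iff₀ hq hqp]
    have h5 : π * (P p * P (q - p)) ≤ π * (P 0 * P q) := mul_le_mul_of_nonneg_left hF pi_pos.le
    have h6 : π * (P 0 * P q) ≤ π * (π * P q) :=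
      mul_le_mul_of_nonneg_left (mul_le_mul_of_nonneg_right sqrtpi_le_pi hq.le) pi_pos.le
    have h7 : π * (π * P q) ≤ π * 4 ^ (p+q) * π * P q := by
      have := mul_le_mul_of_nonneg_right (four_pow_ge_one (p+q))
        (mul_pos (mul_pos pi_pos pi_pos) hq).le
      nlinarith [this]
    nlinarith

lemma GKEY_neg (p q : ℕ) : Gr (-(p:ℤ)) * Gr (-(q:ℤ)) ≤ π * 4 ^ (p + q) * Gr (-(p:ℤ) + -(q:ℤ)) := by
  have pi_pos := Real.pi_pos
  rw [Gr_neg, Gr_neg, show -(p:ℤ) + -(q:ℤ) = -((p + q : ℕ):ℤ) by omega, Gr_neg]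
  have hp := P_pos p
  have hq := P_pos q
  have hpq := P_pos (p + q)
  rw [show π / P p * (π / P q) = (π * π) / (P p * P q) by field_simp,
    show π * 4 ^ (p + q) * (π / P (p+q)) = (π * 4 ^ (p+q) * π) / P (p+q) by ring,
    div_le_div_iff₀ (mul_pos hp hq) hpq]
  have hA := lemA p q
  nlinarith [mul_le_mul_of_nonneg_left hA (mul_pos pi_pos pi_pos).le]

lemma GKEY_real (j k : ℤ) : Gr j * Gr k ≤ π * 4 ^ (j.natAbs + k.natAbs) * Gr (j + k) := by
  rcases le_or_gt 0 j with hj | hj <;> rcases le_or_gt 0 k with hk | hk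
  · obtain ⟨p, rfl⟩ := Int.eq_ofNat_of_zero_le hj
    obtain ⟨q, rfl⟩ := Int.eq_ofNat_of_zero_le hk
    simpa [Int.natAbs_natCast] using GKEY_nonneg p q
  · obtain ⟨p, rfl⟩ := Int.eq_ofNat_of_zero_le hj
    obtain ⟨q, rfl⟩ := Int.exists_eq_neg_ofNat hk.le
    simpa [Int.natAbs_natCast, Int.natAbs_neg] using GKEY_mixed p q
  · obtain ⟨p, rfl⟩ := Int.exists_eq_neg_ofNat hj.le
    obtain ⟨q, rfl⟩ := Int.eq_ofNat_of_zero_le hk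
    have := GKEY_mixed q p
    rw [show (q:ℤ) + -(p:ℤ) = -(p:ℤ) + (q:ℤ) by ring] at this
    simpa [Int.natAbs_natCast, Int.natAbs_neg, mul_comm, Nat.add_comm q p] using this
  · obtain ⟨p, rfl⟩ := Int.exists_eq_neg_ofNat hj.le
    obtain ⟨q, rfl⟩ := Int.exists_eq_neg_ofNat hk.le
    simpa [Int.natAbs_neg, Int.natAbs_natCast] using GKEY_neg p q

noncomputable def g (j : ℤ) : ℝ≥0∞ := ENNReal.ofReal (Gr j)
noncomputable def Ee (x : ℝ) : ℝ≥0∞ := ENNReal.ofReal (Real.exp x)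
noncomputable def F (n : ℝ) (a : ℤ → ℂ) (j : ℤ) : ℝ≥0∞ :=
  ENNReal.ofReal ‖a j‖ * Ee (n * (j : ℝ)) / g j

lemma g_ne_zero (j : ℤ) : g j ≠ 0 := by
  simp [g, ENNReal.ofReal_pos.mpr (Gr_pos j), (ENNReal.ofReal_pos.mpr (Gr_pos j)).ne']
lemma g_ne_top (j : ℤ) : g j ≠ ⊤ := ENNReal.ofReal_ne_top
lemma Ee_ne_zero (x : ℝ) : Ee x ≠ 0 := by
  simp [Ee, (ENNReal.ofReal_pos.mpr (Real.exp_pos x)).ne']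
lemma Ee_ne_top (x : ℝ) : Ee x ≠ ⊤ := ENNReal.ofReal_ne_top
lemma Ee_add (x y : ℝ) : Ee (x + y) = Ee x * Ee y := by
  rw [Ee, Real.exp_add, ENNReal.ofReal_mul (Real.exp_nonneg x)]; rfl
lemma Ee_sq (x : ℝ) : (Ee x) ^ 2 = Ee (2 * x) := by
  rw [sq, ← Ee_add, show x + x = 2 * x by ring]

lemma wnorm_iff (n : ℤ) (a : ℤ → ℂ) :
    wnorm n a < ⊤ ↔ ∑' j : ℤ, (F (n : ℝ) a j) ^ 2 < ⊤ := by
  have hsummand : ∀ j : ℤ,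
      ENNReal.ofReal (‖a j‖ ^ 2 * Real.exp (2 * (n:ℝ) * (j:ℝ))
        / ‖Complex.Gamma ((j : ℂ) + 1 / 2)‖ ^ 2)
        = (F (n : ℝ) a j) ^ 2 := by
    intro j
    have hre : ‖a j‖ ^ 2 * Real.exp (2 * (n:ℝ) * (j:ℝ)) / Gr j ^ 2
        = (‖a j‖ * Real.exp ((n:ℝ) * (j:ℝ))) ^ 2 / Gr j ^ 2 := by
      rw [mul_pow, sq (Real.exp ((n:ℝ) * (j:ℝ))), ← Real.exp_add,
        show (n:ℝ) * j + (n:ℝ) * j = 2 * n * j by ring]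
    show ENNReal.ofReal (‖a j‖ ^ 2 * Real.exp (2 * (n:ℝ) * (j:ℝ)) / Gr j ^ 2) = _
    rw [hre]
    conv_rhs => rw [F, div_eq_mul_inv, mul_pow, ← ENNReal.inv_pow, ← div_eq_mul_inv,
      show ENNReal.ofReal ‖a j‖ * Ee ((n:ℝ) * (j:ℝ))
        = ENNReal.ofReal (‖a j‖ * Real.exp ((n:ℝ) * (j:ℝ))) from
        (ENNReal.ofReal_mul (norm_nonneg _)).symm,
      ← ENNReal.ofReal_pow (by positivity), g, ← ENNReal.ofReal_pow (Gr_pos j).le,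
      ← ENNReal.ofReal_div_of_pos (pow_pos (Gr_pos j) 2)]
  have hts : (∑' j : ℤ, ENNReal.ofReal (‖a j‖ ^ 2 * Real.exp (2 * (n:ℝ) * (j:ℝ))
        / ‖Complex.Gamma ((j : ℂ) + 1 / 2)‖ ^ 2)) = ∑' j : ℤ, (F (n : ℝ) a j) ^ 2 :=
    tsum_congr hsummand
  rw [wnorm, ENNReal.rpow_lt_top_iff_of_pos (by norm_num : (0:ℝ) < 1/2), hts]

lemma F_shift (n d : ℝ) (a : ℤ → ℂ) (j : ℤ) : F (n + d) a j = F n a j * Ee (d * j) := by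
  rw [F, F, show (n + d) * (j:ℝ) = n * j + d * j by ring, Ee_add, div_eq_mul_inv,
    div_eq_mul_inv]
  ring

lemma mul_self_le_sq_add_sq (x y : ℝ≥0∞) : x * y ≤ x ^ 2 + y ^ 2 := by
  rcases le_total x y with h | h
  · calc x * y ≤ y * y := mul_le_mul_left h y
    _ = y ^ 2 := (sq y).symm
    _ ≤ x ^ 2 + y ^ 2 := le_add_self
  · calc x * y ≤ x * x := mul_le_mul_right h x
    _ = x ^ 2 := (sq x).symm
    _ ≤ x ^ 2 + y ^ 2 := le_self_add

lemma F_pointwise (n : ℝ) (a : ℤ → ℂ) (j : ℤ) :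
    F n a j ≤ ((F (n+1) a j) ^ 2 + (F (n-1) a j) ^ 2) + Ee (-(2 * |(j:ℝ)|)) := by
  rcases le_or_gt 0 j with h | h
  · have habs : |(j:ℝ)| = (j:ℝ) := abs_of_nonneg (by exact_mod_cast h)
    have h1 : F n a j = F (n+1) a j * Ee (-1 * j) := by
      have := F_shift (n+1) (-1) a j
      rw [show n + 1 + -1 = n by ring] at this
      exact this
    rw [h1, habs]
    calc F (n+1) a j * Ee (-1 * j) ≤ (F (n+1) a j) ^ 2 + (Ee (-1 * j)) ^ 2 :=
        mul_self_le_sq_add_sq _ _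
    _ = (F (n+1) a j) ^ 2 + Ee (-(2 * j)) := by
        rw [Ee_sq, show 2 * (-1 * (j:ℝ)) = -(2 * j) by ring]
    _ ≤ ((F (n+1) a j) ^ 2 + (F (n-1) a j) ^ 2) + Ee (-(2 * j)) := by
        gcongr
        exact le_self_add
  · have habs : |(j:ℝ)| = -(j:ℝ) := abs_of_neg (by exact_mod_cast h)
    have h1 : F n a j = F (n-1) a j * Ee (1 * j) := by
      have := F_shift (n-1) 1 a j
      rw [show n - 1 + 1 = n by ring] at this
      exact this
    rw [h1, habs]
    calc F (n-1) a j * Ee (1 * j) ≤ (F (n-1) a j) ^ 2 + (Ee (1 * j)) ^ 2 :=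
        mul_self_le_sq_add_sq _ _
    _ = (F (n-1) a j) ^ 2 + Ee (-(2 * -j)) := by
        rw [Ee_sq, show 2 * (1 * (j:ℝ)) = -(2 * -j) by ring]
    _ ≤ ((F (n+1) a j) ^ 2 + (F (n-1) a j) ^ 2) + Ee (-(2 * -j)) := by
        gcongr
        exact le_add_self

lemma tsum_w_lt_top : ∑' j : ℤ, Ee (-(2 * |(j:ℝ)|)) < ⊤ := by
  have hgeo : Summable (fun m : ℕ => Real.exp (-2) ^ m) :=
    summable_geometric_of_lt_one (Real.exp_nonneg _)
      (by
        have := Real.exp_lt_exp.mpr (show (-2:ℝ) < 0 by norm_num)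
        simpa [Real.exp_zero] using this)
  have hs : Summable (fun j : ℤ => Real.exp (-(2 * |(j:ℝ)|))) := by
    apply Summable.of_nat_of_neg
    · apply hgeo.congr
      intro m
      rw [← Real.exp_nat_mul]
      congr 1
      push_cast
      rw [abs_of_nonneg (Nat.cast_nonneg m)]
      ring
    · apply hgeo.congr
      intro m
      rw [← Real.exp_nat_mul]
      congr 1
      push_cast
      rw [abs_neg, abs_of_nonneg (Nat.cast_nonneg m)]
      ring
  rw [show (fun j : ℤ => Ee (-(2 * |(j:ℝ)|)))
      = fun j : ℤ => ENNReal.ofReal (Real.exp (-(2 * |(j:ℝ)|))) from rfl,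
    ← ENNReal.ofReal_tsum_of_nonneg (fun j => Real.exp_nonneg _) hs]
  exact ENNReal.ofReal_lt_top

lemma l1_lt_top (n : ℝ) (a : ℤ → ℂ)
    (h1 : ∑' j : ℤ, (F (n+1) a j) ^ 2 < ⊤) (h2 : ∑' j : ℤ, (F (n-1) a j) ^ 2 < ⊤) :
    ∑' j : ℤ, F n a j < ⊤ := by
  calc ∑' j : ℤ, F n a j
      ≤ ∑' j : ℤ, (((F (n+1) a j) ^ 2 + (F (n-1) a j) ^ 2) + Ee (-(2 * |(j:ℝ)|))) :=
        ENNReal.tsum_le_tsum (F_pointwise n a)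
    _ = (∑' j : ℤ, ((F (n+1) a j) ^ 2 + (F (n-1) a j) ^ 2))
        + ∑' j : ℤ, Ee (-(2 * |(j:ℝ)|)) := ENNReal.tsum_add
    _ = ((∑' j : ℤ, (F (n+1) a j) ^ 2) + ∑' j : ℤ, (F (n-1) a j) ^ 2)
        + ∑' j : ℤ, Ee (-(2 * |(j:ℝ)|)) := by rw [ENNReal.tsum_add]
    _ < ⊤ := by
        have := tsum_w_lt_top
        exact (ENNReal.add_lt_top.mpr ⟨ENNReal.add_lt_top.mpr ⟨h1, h2⟩, this⟩)

noncomputable def Phi (n : ℝ) (a : ℤ → ℂ) (j : ℤ) : ℝ≥0∞ :=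
  F n a j * 4 ^ j.natAbs

lemma four_pow_le_Ee (m : ℕ) : (4 : ℝ≥0∞) ^ m ≤ Ee (2 * m) := by
  have h2 : (4:ℝ) ≤ Real.exp 2 := by
    have := Real.exp_one_gt_d9
    have h3 : Real.exp 2 = Real.exp 1 * Real.exp 1 := by
      rw [← Real.exp_add]; norm_num
    nlinarith [Real.exp_pos 1]
  have h1 : (4:ℝ) ^ m ≤ Real.exp (2 * m) := by
    have h3 : (4:ℝ) ^ m ≤ (Real.exp 2) ^ m := pow_le_pow_left₀ (by norm_num) h2 m
    have h4 : (Real.exp 2) ^ m = Real.exp (2 * m) := by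
      rw [← Real.exp_nat_mul, mul_comm]
    rwa [h4] at h3
  have h0 : (4 : ℝ≥0∞) ^ m = ENNReal.ofReal ((4:ℝ) ^ m) := by
    rw [ENNReal.ofReal_pow (by norm_num : (0:ℝ) ≤ 4), ENNReal.ofReal_ofNat]
  rw [h0]
  exact ENNReal.ofReal_le_ofReal h1

lemma Ee_zero : Ee 0 = 1 := by rw [Ee, Real.exp_zero, ENNReal.ofReal_one]

lemma Phi_le (n : ℝ) (a : ℤ → ℂ) (j : ℤ) :
    Phi n a j ≤ F (n + 2) a j + F (n - 2) a j := by
  have habs : ((j.natAbs : ℕ) : ℝ) = |(j : ℝ)| := by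
    rw [Nat.cast_natAbs]
    push_cast
    rfl
  have h1 : Phi n a j ≤ F n a j * Ee (2 * |(j:ℝ)|) := by
    rw [Phi]
    apply mul_le_mul_right
    rw [← habs]
    exact four_pow_le_Ee j.natAbs
  rcases le_or_gt 0 j with h | h
  · have habs2 : |(j:ℝ)| = (j:ℝ) := abs_of_nonneg (by exact_mod_cast h)
    rw [habs2] at h1
    have h2 : F n a j * Ee (2 * (j:ℝ)) = F (n + 2) a j := by
      rw [F_shift n 2 a j]
    rw [h2] at h1
    exact h1.trans le_self_add
  · have habs2 : |(j:ℝ)| = -(j:ℝ) := abs_of_neg (by exact_mod_cast h)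
    rw [habs2] at h1
    have h2 : F n a j * Ee (2 * -(j:ℝ)) = F (n - 2) a j := by
      have h3 := F_shift (n - 2) 2 a j
      rw [show n - 2 + 2 = n by ring] at h3
      rw [h3, mul_assoc, ← Ee_add, show 2 * (j:ℝ) + 2 * -(j:ℝ) = 0 by ring, Ee_zero,
        mul_one]
    rw [h2] at h1
    exact h1.trans le_add_self

lemma gkey (j k : ℤ) :
    g j * g k ≤ ENNReal.ofReal π * (4 ^ j.natAbs * 4 ^ k.natAbs) * g (j + k) := by
  have h := GKEY_real j k
  calc g j * g k = ENNReal.ofReal (Gr j * Gr k) := (ENNReal.ofReal_mul (Gr_pos j).le).symm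
  _ ≤ ENNReal.ofReal (π * 4 ^ (j.natAbs + k.natAbs) * Gr (j + k)) :=
      ENNReal.ofReal_le_ofReal h
  _ = ENNReal.ofReal π * (4 ^ j.natAbs * 4 ^ k.natAbs) * g (j + k) := by
      rw [ENNReal.ofReal_mul (by positivity), ENNReal.ofReal_mul (by positivity : (0:ℝ) ≤ π),
        ENNReal.ofReal_pow (by norm_num : (0:ℝ) ≤ 4), ENNReal.ofReal_ofNat, pow_add, g]

lemma ofRealPi_ne_zero : ENNReal.ofReal π ≠ 0 := (ENNReal.ofReal_pos.mpr Real.pi_pos).ne'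

lemma ginv (j k : ℤ) : (g (j+k))⁻¹
    ≤ ENNReal.ofReal π * (4 ^ j.natAbs * 4 ^ k.natAbs) * ((g j)⁻¹ * (g k)⁻¹) := by
  set C := ENNReal.ofReal π * (4 ^ j.natAbs * 4 ^ k.natAbs : ℝ≥0∞) with hC
  have h40 : (4 : ℝ≥0∞) ≠ 0 := by norm_num
  have h4t : (4 : ℝ≥0∞) ≠ ⊤ := by norm_num
  have hC0 : C ≠ 0 :=
    mul_ne_zero ofRealPi_ne_zero (mul_ne_zero (pow_ne_zero _ h40) (pow_ne_zero _ h40))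
  have hCt : C ≠ ⊤ :=
    ENNReal.mul_ne_top ENNReal.ofReal_ne_top
      (ENNReal.mul_ne_top (ENNReal.pow_ne_top h4t) (ENNReal.pow_ne_top h4t))
  have h2 : (C * g (j+k))⁻¹ ≤ (g j * g k)⁻¹ := ENNReal.inv_le_inv.mpr (gkey j k)
  have h3 : (C * g (j+k))⁻¹ = C⁻¹ * (g (j+k))⁻¹ := ENNReal.mul_inv (Or.inl hC0) (Or.inl hCt)
  have h4 : (g j * g k)⁻¹ = (g j)⁻¹ * (g k)⁻¹ :=
    ENNReal.mul_inv (Or.inl (g_ne_zero j)) (Or.inl (g_ne_top j))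
  have h5 := mul_le_mul_right h2 C
  rw [h3, ← mul_assoc, ENNReal.mul_inv_cancel hC0 hCt, one_mul, h4] at h5
  exact h5

lemma key_prod (n : ℝ) (a b : ℤ → ℂ) (j k : ℤ) :
    ENNReal.ofReal ‖a j‖ * ENNReal.ofReal ‖b k‖ * Ee (n * ((j:ℝ) + (k:ℝ))) / g (j + k)
      ≤ ENNReal.ofReal π * (Phi n a j * Phi n b k) := by
  rw [div_eq_mul_inv, show n * ((j:ℝ) + (k:ℝ)) = n * j + n * k by ring, Ee_add]
  calc ENNReal.ofReal ‖a j‖ * ENNReal.ofReal ‖b k‖ * (Ee (n * j) * Ee (n * k)) * (g (j + k))⁻¹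
      ≤ ENNReal.ofReal ‖a j‖ * ENNReal.ofReal ‖b k‖ * (Ee (n * j) * Ee (n * k)) *
        (ENNReal.ofReal π * (4 ^ j.natAbs * 4 ^ k.natAbs) * ((g j)⁻¹ * (g k)⁻¹)) :=
      mul_le_mul_right (ginv j k) _
  _ = ENNReal.ofReal π * (Phi n a j * Phi n b k) := by
      rw [Phi, Phi, F, F, div_eq_mul_inv, div_eq_mul_inv]
      ring

lemma conv_sum_le (n : ℝ) (a b : ℤ → ℂ) :
    (∑' l : ℤ, ∑' j : ℤ,
      ENNReal.ofReal ‖a j‖ * ENNReal.ofReal ‖b (l - j)‖ * Ee (n * (l:ℝ)) / g l)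
      ≤ ENNReal.ofReal π * ((∑' j : ℤ, Phi n a j) * (∑' k : ℤ, Phi n b k)) := by
  have hpt : ∀ l j : ℤ,
      ENNReal.ofReal ‖a j‖ * ENNReal.ofReal ‖b (l - j)‖ * Ee (n * (l:ℝ)) / g l
        ≤ ENNReal.ofReal π * (Phi n a j * Phi n b (l - j)) := by
    intro l j
    have hcast : (l:ℝ) = (j:ℝ) + ((l - j : ℤ):ℝ) := by push_cast; ring
    have hidx : l = j + (l - j) := by ring
    calc ENNReal.ofReal ‖a j‖ * ENNReal.ofReal ‖b (l - j)‖ * Ee (n * (l:ℝ)) / g l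
        = ENNReal.ofReal ‖a j‖ * ENNReal.ofReal ‖b (l - j)‖ *
          Ee (n * ((j:ℝ) + ((l - j : ℤ):ℝ))) / g (j + (l - j)) := by
          rw [← hcast, ← hidx]
    _ ≤ _ := key_prod n a b j (l - j)
  have hre : ∀ j : ℤ, (∑' l : ℤ, Phi n b (l - j)) = ∑' k : ℤ, Phi n b k := by
    intro j
    have := Equiv.tsum_eq (Equiv.subRight j) (Phi n b)
    simpa using this
  calc (∑' l : ℤ, ∑' j : ℤ,
      ENNReal.ofReal ‖a j‖ * ENNReal.ofReal ‖b (l - j)‖ * Ee (n * (l:ℝ)) / g l)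
      ≤ ∑' l : ℤ, ∑' j : ℤ, ENNReal.ofReal π * (Phi n a j * Phi n b (l - j)) :=
      ENNReal.tsum_le_tsum (fun l => ENNReal.tsum_le_tsum (hpt l))
  _ = ∑' j : ℤ, ∑' l : ℤ, ENNReal.ofReal π * (Phi n a j * Phi n b (l - j)) :=
      ENNReal.tsum_comm
  _ = ∑' j : ℤ, ∑' l : ℤ, (ENNReal.ofReal π * Phi n a j) * Phi n b (l - j) := by
      congr 1; funext j; congr 1; funext l; ring
  _ = ∑' j : ℤ, (ENNReal.ofReal π * Phi n a j) * ∑' l : ℤ, Phi n b (l - j) := by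
      congr 1; funext j; exact ENNReal.tsum_mul_left
  _ = ∑' j : ℤ, (ENNReal.ofReal π * Phi n a j) * ∑' k : ℤ, Phi n b k := by
      congr 1; funext j; rw [hre j]
  _ = ENNReal.ofReal π * ((∑' j : ℤ, Phi n a j) * (∑' k : ℤ, Phi n b k)) := by
      rw [ENNReal.tsum_mul_right, ENNReal.tsum_mul_left]
      ring

lemma Phi_sum_lt (n : ℝ) (a : ℤ → ℂ)
    (h3 : ∑' j : ℤ, (F (n+3) a j) ^ 2 < ⊤) (h1 : ∑' j : ℤ, (F (n+1) a j) ^ 2 < ⊤)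
    (hm1 : ∑' j : ℤ, (F (n-1) a j) ^ 2 < ⊤) (hm3 : ∑' j : ℤ, (F (n-3) a j) ^ 2 < ⊤) :
    ∑' j : ℤ, Phi n a j < ⊤ := by
  have hp : ∑' j : ℤ, F (n+2) a j < ⊤ := by
    apply l1_lt_top
    · rw [show n+2+1 = n+3 by ring]; exact h3
    · rw [show n+2-1 = n+1 by ring]; exact h1
  have hm : ∑' j : ℤ, F (n-2) a j < ⊤ := by
    apply l1_lt_top
    · rw [show n-2+1 = n-1 by ring]; exact hm1
    · rw [show n-2-1 = n-3 by ring]; exact hm3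
  calc ∑' j : ℤ, Phi n a j ≤ ∑' j : ℤ, (F (n+2) a j + F (n-2) a j) :=
      ENNReal.tsum_le_tsum (Phi_le n a)
  _ = (∑' j : ℤ, F (n+2) a j) + ∑' j : ℤ, F (n-2) a j := ENNReal.tsum_add
  _ < ⊤ := ENNReal.add_lt_top.mpr ⟨hp, hm⟩

lemma le_of_div_le {u R G E0 : ℝ≥0∞} (hG0 : G ≠ 0) (hGt : G ≠ ⊤) (hE0 : E0 ≠ 0)
    (hEt : E0 ≠ ⊤) (h : u * E0 / G ≤ R) : u ≤ R * G * E0⁻¹ := by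
  have h1 : u * E0 / G * G ≤ R * G := mul_le_mul_left h G
  rw [ENNReal.div_mul_cancel hG0 hGt] at h1
  have h2 := mul_le_mul_left h1 E0⁻¹
  rwa [mul_assoc, ENNReal.mul_inv_cancel hE0 hEt, mul_one] at h2

lemma prod_tsum_le (n : ℝ) (b : ℤ → ℂ) (l : ℤ) (Sa Sb : ℤ → ℝ≥0∞) :
    (∑' j : ℤ, ENNReal.ofReal π * (Sa j * Sb (l - j)))
      ≤ ENNReal.ofReal π * ((∑' j : ℤ, Sa j) * (∑' k : ℤ, Sb k)) := by
  calc (∑' j : ℤ, ENNReal.ofReal π * (Sa j * Sb (l - j)))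
      ≤ ∑' j : ℤ, (ENNReal.ofReal π * (∑' k : ℤ, Sb k)) * Sa j := by
        apply ENNReal.tsum_le_tsum
        intro j
        calc ENNReal.ofReal π * (Sa j * Sb (l - j))
            ≤ ENNReal.ofReal π * (Sa j * (∑' k : ℤ, Sb k)) := by
              apply mul_le_mul_right
              exact mul_le_mul_right (ENNReal.le_tsum (l - j)) _
        _ = (ENNReal.ofReal π * (∑' k : ℤ, Sb k)) * Sa j := by ring
  _ = (ENNReal.ofReal π * (∑' k : ℤ, Sb k)) * (∑' j : ℤ, Sa j) := ENNReal.tsum_mul_left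
  _ = ENNReal.ofReal π * ((∑' j : ℤ, Sa j) * (∑' k : ℤ, Sb k)) := by ring

end CPaux

/-- The ring `ℂ{{z,z⁻¹}}` is closed under Cauchy product: if
`‖a‖ₙ < ∞` and `‖b‖ₙ < ∞` for all sufficiently large integers `n`, then for
every `l` the sum `c_l := Σ_{j∈ℤ} a_j b_{l-j}` converges absolutely, and
`‖c‖ₙ < ∞` for all sufficiently large integers `n`. -/
theorem cauchy_product_closed (a b : ℤ → ℂ)
    (ha : ∃ Na : ℤ, ∀ n : ℤ, Na ≤ n → wnorm n a < ⊤)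
    (hb : ∃ Nb : ℤ, ∀ n : ℤ, Nb ≤ n → wnorm n b < ⊤) :
    (∀ l : ℤ, Summable (fun j : ℤ => ‖a j * b (l - j)‖)) ∧
    (∃ N : ℤ, ∀ n : ℤ, N ≤ n →
      wnorm n (fun l : ℤ => ∑' j : ℤ, a j * b (l - j)) < ⊤) := by
  classical
  open CPaux in
  obtain ⟨Na, hA⟩ := ha
  obtain ⟨Nb, hB⟩ := hb
  set N0 : ℤ := max Na Nb with hN0
  have hSa : ∀ m : ℤ, N0 ≤ m → ∑' j : ℤ, (F (m:ℝ) a j) ^ 2 < ⊤ := fun m hm =>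
    (wnorm_iff m a).mp (hA m (le_trans (le_max_left _ _) hm))
  have hSb : ∀ m : ℤ, N0 ≤ m → ∑' j : ℤ, (F (m:ℝ) b j) ^ 2 < ⊤ := fun m hm =>
    (wnorm_iff m b).mp (hB m (le_trans (le_max_right _ _) hm))
  have hPhi : ∀ (c : ℤ → ℂ), (∀ m : ℤ, N0 ≤ m → ∑' j : ℤ, (F (m:ℝ) c j) ^ 2 < ⊤) →
      ∀ n : ℤ, N0 + 3 ≤ n → ∑' j : ℤ, Phi (n:ℝ) c j < ⊤ := by
    intro c hc n hn
    apply Phi_sum_lt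
    · rw [show ((n:ℝ)+3) = ((n+3 : ℤ):ℝ) by push_cast; ring]
      exact hc (n+3) (by omega)
    · rw [show ((n:ℝ)+1) = ((n+1 : ℤ):ℝ) by push_cast; ring]
      exact hc (n+1) (by omega)
    · rw [show ((n:ℝ)-1) = ((n-1 : ℤ):ℝ) by push_cast; ring]
      exact hc (n-1) (by omega)
    · rw [show ((n:ℝ)-3) = ((n-3 : ℤ):ℝ) by push_cast; ring]
      exact hc (n-3) (by omega)
  have hPa : ∀ n : ℤ, N0 + 3 ≤ n → ∑' j : ℤ, Phi (n:ℝ) a j < ⊤ := hPhi a hSa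
  have hPb : ∀ n : ℤ, N0 + 3 ≤ n → ∑' j : ℤ, Phi (n:ℝ) b j < ⊤ := hPhi b hSb
  have hptcore : ∀ (n : ℝ) (l j : ℤ),
      ENNReal.ofReal ‖a j‖ * ENNReal.ofReal ‖b (l - j)‖ * Ee (n * (l:ℝ)) / g l
        ≤ ENNReal.ofReal π * (Phi n a j * Phi n b (l - j)) := by
    intro n l j
    have hcast : (l:ℝ) = (j:ℝ) + ((l - j : ℤ):ℝ) := by push_cast; ring
    have hidx : l = j + (l - j) := by ring
    calc ENNReal.ofReal ‖a j‖ * ENNReal.ofReal ‖b (l - j)‖ * Ee (n * (l:ℝ)) / g l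
        = ENNReal.ofReal ‖a j‖ * ENNReal.ofReal ‖b (l - j)‖ *
          Ee (n * ((j:ℝ) + ((l - j : ℤ):ℝ))) / g (j + (l - j)) := by
          rw [← hcast, ← hidx]
    _ ≤ _ := key_prod n a b j (l - j)
  have part1 : ∀ l : ℤ, Summable (fun j : ℤ => ‖a j * b (l - j)‖) := by
    intro l
    have hfin : ∑' j : ℤ, ENNReal.ofReal ‖a j * b (l - j)‖ < ⊤ := by
      set n : ℤ := N0 + 3 with hn
      have hpt : ∀ j : ℤ, ENNReal.ofReal ‖a j * b (l - j)‖ ≤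
          (ENNReal.ofReal π * (Phi (n:ℝ) a j * Phi (n:ℝ) b (l - j))) *
            (g l * (Ee ((n:ℝ) * (l:ℝ)))⁻¹) := by
        intro j
        have h1 := hptcore (n:ℝ) l j
        have h2 := le_of_div_le (g_ne_zero l) (g_ne_top l) (Ee_ne_zero _) (Ee_ne_top _) h1
        rw [norm_mul, ENNReal.ofReal_mul (norm_nonneg _)]
        calc ENNReal.ofReal ‖a j‖ * ENNReal.ofReal ‖b (l - j)‖
            ≤ ENNReal.ofReal π * (Phi (n:ℝ) a j * Phi (n:ℝ) b (l - j)) * g l *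
              (Ee ((n:ℝ) * (l:ℝ)))⁻¹ := h2
        _ = (ENNReal.ofReal π * (Phi (n:ℝ) a j * Phi (n:ℝ) b (l - j))) *
              (g l * (Ee ((n:ℝ) * (l:ℝ)))⁻¹) := by ring
      calc ∑' j : ℤ, ENNReal.ofReal ‖a j * b (l - j)‖
          ≤ ∑' j : ℤ, (ENNReal.ofReal π * (Phi (n:ℝ) a j * Phi (n:ℝ) b (l - j))) *
            (g l * (Ee ((n:ℝ) * (l:ℝ)))⁻¹) := ENNReal.tsum_le_tsum hpt
      _ = (∑' j : ℤ, ENNReal.ofReal π * (Phi (n:ℝ) a j * Phi (n:ℝ) b (l - j))) *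
            (g l * (Ee ((n:ℝ) * (l:ℝ)))⁻¹) := ENNReal.tsum_mul_right
      _ ≤ (ENNReal.ofReal π * ((∑' j : ℤ, Phi (n:ℝ) a j) * (∑' k : ℤ, Phi (n:ℝ) b k))) *
            (g l * (Ee ((n:ℝ) * (l:ℝ)))⁻¹) :=
          mul_le_mul_left (prod_tsum_le (n:ℝ) b l _ _) _
      _ < ⊤ := by
          apply ENNReal.mul_lt_top
          · apply ENNReal.mul_lt_top ENNReal.ofReal_lt_top
            exact ENNReal.mul_lt_top (hPa n (le_refl _)) (hPb n (le_refl _))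
          · apply ENNReal.mul_lt_top ((g_ne_top l).lt_top)
            exact ENNReal.inv_lt_top.mpr (pos_iff_ne_zero.mpr (Ee_ne_zero _))
    have hsum := ENNReal.summable_toReal hfin.ne
    have heq : (fun j : ℤ => (ENNReal.ofReal ‖a j * b (l - j)‖).toReal)
        = fun j : ℤ => ‖a j * b (l - j)‖ :=
      funext fun j => ENNReal.toReal_ofReal (norm_nonneg _)
    rwa [heq] at hsum
  refine ⟨part1, ⟨N0 + 3, ?_⟩⟩
  intro n hn
  rw [wnorm_iff]
  set c : ℤ → ℂ := fun l : ℤ => ∑' j : ℤ, a j * b (l - j) with hcdef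
  have hcl : ∀ l : ℤ, ENNReal.ofReal ‖c l‖ ≤ ∑' j : ℤ, ENNReal.ofReal ‖a j * b (l - j)‖ := by
    intro l
    have h1 : ‖c l‖ ≤ ∑' j : ℤ, ‖a j * b (l - j)‖ := norm_tsum_le_tsum_norm (part1 l)
    calc ENNReal.ofReal ‖c l‖ ≤ ENNReal.ofReal (∑' j : ℤ, ‖a j * b (l - j)‖) :=
        ENNReal.ofReal_le_ofReal h1
    _ = ∑' j : ℤ, ENNReal.ofReal ‖a j * b (l - j)‖ :=
        ENNReal.ofReal_tsum_of_nonneg (fun _ => norm_nonneg _) (part1 l)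
  have hL : ∑' l : ℤ, F (n:ℝ) c l < ⊤ := by
    have hpt : ∀ l : ℤ, F (n:ℝ) c l ≤ ∑' j : ℤ,
        ENNReal.ofReal ‖a j‖ * ENNReal.ofReal ‖b (l - j)‖ * Ee ((n:ℝ) * (l:ℝ)) / g l := by
      intro l
      rw [F, div_eq_mul_inv]
      calc ENNReal.ofReal ‖c l‖ * Ee ((n:ℝ) * (l:ℝ)) * (g l)⁻¹
          ≤ (∑' j : ℤ, ENNReal.ofReal ‖a j * b (l - j)‖) * Ee ((n:ℝ) * (l:ℝ)) * (g l)⁻¹ :=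
          mul_le_mul_left (mul_le_mul_left (hcl l) _) _
      _ = ∑' j : ℤ, ENNReal.ofReal ‖a j * b (l - j)‖ * Ee ((n:ℝ) * (l:ℝ)) * (g l)⁻¹ := by
          rw [ENNReal.tsum_mul_right, ENNReal.tsum_mul_right]
      _ = ∑' j : ℤ, ENNReal.ofReal ‖a j‖ * ENNReal.ofReal ‖b (l - j)‖ *
            Ee ((n:ℝ) * (l:ℝ)) / g l := by
          congr 1
          funext j
          rw [norm_mul, ENNReal.ofReal_mul (norm_nonneg _), div_eq_mul_inv]
    calc ∑' l : ℤ, F (n:ℝ) c l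
        ≤ ∑' l : ℤ, ∑' j : ℤ,
          ENNReal.ofReal ‖a j‖ * ENNReal.ofReal ‖b (l - j)‖ * Ee ((n:ℝ) * (l:ℝ)) / g l :=
        ENNReal.tsum_le_tsum hpt
    _ ≤ ENNReal.ofReal π * ((∑' j : ℤ, Phi (n:ℝ) a j) * (∑' k : ℤ, Phi (n:ℝ) b k)) :=
        conv_sum_le (n:ℝ) a b
    _ < ⊤ := by
        apply ENNReal.mul_lt_top ENNReal.ofReal_lt_top
        exact ENNReal.mul_lt_top (hPa n hn) (hPb n hn)
  calc ∑' l : ℤ, (F (n:ℝ) c l) ^ 2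
      ≤ ∑' l : ℤ, F (n:ℝ) c l * ∑' m : ℤ, F (n:ℝ) c m := by
        apply ENNReal.tsum_le_tsum
        intro l
        rw [sq]
        exact mul_le_mul_right (ENNReal.le_tsum l) _
  _ = (∑' l : ℤ, F (n:ℝ) c l) * ∑' m : ℤ, F (n:ℝ) c m := ENNReal.tsum_mul_right
  _ < ⊤ := ENNReal.mul_lt_top hL hL
end

section
/- Let n ≥ 1 and let g ∈ ℂ[[x₁,…,xₙ]] be a multivariate formal power series over ℂ. Suppose g is algebraic over the subring of convergent power series: there exist d ≥ 1 and formal power series f₀, f₁, …, f_d ∈ ℂ[[x₁,…,xₙ]], not all zero, each of which is convergent, such that f₀·g^d + f₁·g^{d-1} + ⋯ + f_d = 0 in ℂ[[x₁,…,xₙ]]. Then g is itself convergent. Equivalently, the intersection of the algebraic closure of ℂ{x₁,…,xₙ} with ℂ[[x₁,…,xₙ]], taken inside the algebraic closure of the fraction field of ℂ[[x₁,…,xₙ]], equals ℂ{x₁,…,xₙ}. -/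
/-- A multivariate formal power series `f ∈ ℂ[[x₁,…,xₙ]]` is *convergent* if there
exist `C > 0` and `R > 0` with `|coeff_m f| ≤ C·R^{|m|}` for every multi-index `m`,
where `|m| = Σᵢ mᵢ`. -/
def IsConvergent {n : ℕ} (f : MvPowerSeries (Fin n) ℂ) : Prop :=
  ∃ C : ℝ, 0 < C ∧ ∃ R : ℝ, 0 < R ∧
    ∀ m : Fin n →₀ ℕ,
      ‖MvPowerSeries.coeff m f‖ ≤ C * R ^ (m.sum fun _ k => k)

/-!
Among the polynomial relations `P(g) = 0` with convergent coefficients take one of least degree; in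
characteristic zero this forces `P'(g) ≠ 0`. Integer weights can be chosen so that one monomial
`c xᵅ` is the lowest-weight term of `P'(g)`. Split `g = g₀ + r` with `g₀` a polynomial and all
monomials of `r` of weight above that of `α`. In the Taylor expansion `∑ⱼ cⱼ rʲ = 0` of `P` at `g₀`,
`c₁ = P'(g₀)` is `c xᵅ` up to terms of higher weight, so `c` times the coefficient of `xᵝ` in `r` is
a coefficient of an expression in the part of `r` of weight below that of `β`. Induction on the
weight then bounds the `ℓ¹`-norm of the weight-`k` part of `r` by `C θᵏ / (k + 1)²`; the factor
`1 / (k + 1)²` survives convolution up to a constant, which is what controls the products.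
-/

open MvPowerSeries Finset Finsupp
open scoped Polynomial

section ComponentNorm

variable {σ R : Type*} [Fintype σ] [NormedRing R] {w : σ → ℕ}

open scoped Classical in
noncomputable def weightLevel (w : σ → ℕ) (k : ℕ) : Finset (σ →₀ ℕ) :=
  {β ∈ Iic (equivFunOnFinite.symm fun _ => k) | weight w β = k}

theorem mem_weightLevel (hw : ∀ i, w i ≠ 0) {k : ℕ} {β : σ →₀ ℕ} :
    β ∈ weightLevel w k ↔ weight w β = k := by
  simp only [weightLevel, mem_filter, mem_Iic, and_iff_right_iff_imp]
  rintro rfl i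
  exact le_weight w (hw i) β

theorem card_weightLevel_le (w : σ → ℕ) (k : ℕ) :
    #(weightLevel w k) ≤ (k + 1) ^ Fintype.card σ := by
  classical
  calc #(weightLevel w k) ≤ #(Iic (equivFunOnFinite.symm fun (_ : σ) => k)) := card_filter_le _ _
    _ ≤ (k + 1) ^ Fintype.card σ := by
      rw [card_Iic]
      refine (prod_le_pow_card _ _ (k + 1) fun i _ => by simp).trans ?_
      exact Nat.pow_le_pow_right k.succ_pos (card_le_univ _)

noncomputable def componentNorm (w : σ → ℕ) (f : MvPowerSeries σ R) (k : ℕ) : ℝ :=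
  ∑ β ∈ weightLevel w k, ‖coeff β f‖

theorem componentNorm_nonneg (w : σ → ℕ) (f : MvPowerSeries σ R) (k : ℕ) :
    0 ≤ componentNorm w f k :=
  sum_nonneg fun _ _ => norm_nonneg _

theorem norm_coeff_le_componentNorm (hw : ∀ i, w i ≠ 0) (f : MvPowerSeries σ R)
    (β : σ →₀ ℕ) : ‖coeff β f‖ ≤ componentNorm w f (weight w β) :=
  single_le_sum (f := fun γ => ‖coeff γ f‖) (fun _ _ => norm_nonneg _)
    ((mem_weightLevel hw).2 rfl)

theorem componentNorm_add_le (w : σ → ℕ) (f g : MvPowerSeries σ R) (k : ℕ) :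
    componentNorm w (f + g) k ≤ componentNorm w f k + componentNorm w g k := by
  rw [componentNorm, componentNorm, componentNorm, ← sum_add_distrib]
  exact sum_le_sum fun β _ => by simpa using norm_add_le (coeff β f) (coeff β g)

theorem componentNorm_sum_le {ι : Type*} (w : σ → ℕ) (s : Finset ι)
    (F : ι → MvPowerSeries σ R) (k : ℕ) :
    componentNorm w (∑ j ∈ s, F j) k ≤ ∑ j ∈ s, componentNorm w (F j) k := by
  unfold componentNorm
  rw [Finset.sum_comm]
  exact sum_le_sum fun β _ => by simpa using norm_sum_le s fun j => coeff β (F j)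

theorem componentNorm_mul_le (hw : ∀ i, w i ≠ 0) (f g : MvPowerSeries σ R) (k : ℕ) :
    componentNorm w (f * g) k ≤
      ∑ x ∈ antidiagonal k, componentNorm w f x.1 * componentNorm w g x.2 := by
  classical
  calc componentNorm w (f * g) k
      ≤ ∑ β ∈ weightLevel w k, ∑ p ∈ antidiagonal β, ‖coeff p.1 f‖ * ‖coeff p.2 g‖ :=
        sum_le_sum fun β _ => by
          rw [coeff_mul]
          exact (norm_sum_le _ _).trans (sum_le_sum fun p _ => norm_mul_le _ _)
    _ = ∑ x ∈ antidiagonal k, ∑ p ∈ weightLevel w x.1 ×ˢ weightLevel w x.2,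
          ‖coeff p.1 f‖ * ‖coeff p.2 g‖ := by
        rw [sum_sigma', sum_sigma']
        refine sum_nbij' (fun x => ⟨(weight w x.2.1, weight w x.2.2), x.2⟩)
          (fun y => ⟨y.2.1 + y.2.2, y.2⟩) ?_ ?_ ?_ ?_ (fun _ _ => rfl)
        · simp +contextual [mem_weightLevel hw, ← map_add]
        all_goals simp +contextual [mem_weightLevel hw]
    _ = ∑ x ∈ antidiagonal k, componentNorm w f x.1 * componentNorm w g x.2 := by
        simp only [componentNorm, sum_mul_sum, sum_product]

theorem sum_norm_coeff_add_le_componentNorm (hw : ∀ i, w i ≠ 0) (f : MvPowerSeries σ R)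
    (α : σ →₀ ℕ) (k : ℕ) :
    ∑ β ∈ weightLevel w k, ‖coeff (α + β) f‖ ≤ componentNorm w f (weight w α + k) := by
  refine (sum_map _ (addLeftEmbedding α) fun γ => ‖coeff γ f‖).symm.trans_le
    (sum_le_sum_of_subset_of_nonneg ?_ fun _ _ _ => norm_nonneg _)
  intro γ
  simp only [mem_map, mem_weightLevel hw, addLeftEmbedding_apply]
  rintro ⟨β, rfl, rfl⟩
  exact map_add _ _ _

theorem componentNorm_eq_zero_of_lt_weightedOrder {f : MvPowerSeries σ R} {k : ℕ}
    (hk : k < f.weightedOrder w) : componentNorm w f k = 0 :=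
  sum_eq_zero fun β hβ => by
    rw [coeff_eq_zero_of_lt_weightedOrder w ((mem_filter.1 hβ).2 ▸ hk), norm_zero]

end ComponentNorm

section WeightedOrder

variable {σ R : Type*} [Ring R] {w : σ → ℕ} {t : ℕ∞} {f g : MvPowerSeries σ R}

theorem lt_weightedOrder_add (hf : t < f.weightedOrder w) (hg : t < g.weightedOrder w) :
    t < (f + g).weightedOrder w :=
  (lt_min hf hg).trans_le (min_weightedOrder_le_add w)

theorem lt_weightedOrder_sub (hf : t < f.weightedOrder w) (hg : t < g.weightedOrder w) :
    t < (f - g).weightedOrder w := by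
  rw [sub_eq_add_neg]
  exact lt_weightedOrder_add hf (by rwa [weightedOrder_neg])

theorem lt_weightedOrder_mul_of_lt_right (g : MvPowerSeries σ R) (hf : t < f.weightedOrder w) :
    t < (g * f).weightedOrder w :=
  hf.trans_le (le_add_self.trans (le_weightedOrder_mul w))

noncomputable def weightedTrunc (w : σ → ℕ) (k : ℕ) (f : MvPowerSeries σ R) : MvPowerSeries σ R :=
  fun β => if weight w β < k then coeff β f else 0

theorem coeff_weightedTrunc (k : ℕ) (β : σ →₀ ℕ) :
    coeff β (weightedTrunc w k f) = if weight w β < k then coeff β f else 0 :=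
  rfl

theorem le_weightedOrder_sub_weightedTrunc (k : ℕ) :
    (k : ℕ∞) ≤ (f - weightedTrunc w k f).weightedOrder w :=
  nat_le_weightedOrder w fun β hβ => by simp [coeff_weightedTrunc, hβ]

theorem weightedOrder_le_weightedTrunc (k : ℕ) :
    f.weightedOrder w ≤ (weightedTrunc w k f).weightedOrder w :=
  le_weightedOrder w fun β hβ => by
    rw [coeff_weightedTrunc, coeff_eq_zero_of_lt_weightedOrder w hβ, ite_self]

end WeightedOrder

section PolynomialRelations

variable {A : Type*} [CommRing A]

theorem Polynomial.eval_sub_mul_eq (Q : A[X]) (m s : A) :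
    Q.eval s - m * s = Q.coeff 0 + (Q.coeff 1 - m) * s +
      ∑ j ∈ range Q.natDegree, Q.coeff (j + 2) * s ^ (j + 2) := by
  rw [Polynomial.eval_eq_sum_range' (n := Q.natDegree + 2) (by omega), sum_range_succ',
    sum_range_succ']
  ring

variable (S : Subring A)

theorem exists_polynomial_of_sum_mul_pow_eq_zero {x : A} {d : ℕ} {f : ℕ → A}
    (hS : ∀ i ≤ d, f i ∈ S) (hne : ∃ i ≤ d, f i ≠ 0)
    (heq : ∑ i ∈ range (d + 1), f i * x ^ (d - i) = 0) :
    ∃ P : A[X], P ≠ 0 ∧ (∀ j, P.coeff j ∈ S) ∧ P.eval x = 0 := by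
  classical
  set P : A[X] := ∑ i ∈ range (d + 1), Polynomial.C (f i) * Polynomial.X ^ (d - i)
  have hcoeff : ∀ j, P.coeff j = ∑ i ∈ range (d + 1), if j = d - i then f i else 0 := fun j => by
    simp only [P, Polynomial.finsetSum_coeff, Polynomial.coeff_C_mul_X_pow]
  obtain ⟨i₀, hi₀, hfi₀⟩ := hne
  refine ⟨P, fun hP => hfi₀ ?_, fun j => ?_, by simpa [P, Polynomial.eval_finsetSum] using heq⟩
  · have := hcoeff (d - i₀)
    rw [hP, Polynomial.coeff_zero, sum_eq_single_of_mem i₀ (mem_range.2 (by omega))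
      fun i hi hne => by rw [if_neg (by rw [mem_range] at hi; omega)], if_pos rfl] at this
    exact this.symm
  · rw [hcoeff]
    exact S.sum_mem fun i hi => by
      split_ifs
      exacts [hS i (by rw [mem_range] at hi; omega), S.zero_mem]

theorem coeff_taylor_mem {P : A[X]} (hP : ∀ i, P.coeff i ∈ S) {x : A} (hx : x ∈ S) (j : ℕ) :
    (P.taylor x).coeff j ∈ S := by
  rw [Polynomial.taylor_coeff, Polynomial.eval_eq_sum_range]
  refine S.sum_mem fun i _ => S.mul_mem ?_ (S.pow_mem hx i)
  rw [Polynomial.hasseDeriv_coeff]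
  exact S.mul_mem (natCast_mem S _) (hP _)

theorem exists_eval_eq_zero_eval_derivative_ne_zero [IsAddTorsionFree A] {x : A} {P : A[X]}
    (hP0 : P ≠ 0) (hPS : ∀ i, P.coeff i ∈ S) (hPx : P.eval x = 0) :
    ∃ P : A[X], (∀ i, P.coeff i ∈ S) ∧ P.eval x = 0 ∧ (Polynomial.derivative P).eval x ≠ 0 := by
  induction h : P.natDegree using Nat.strong_induction_on generalizing P with
  | _ N ih =>
    by_cases hd : (Polynomial.derivative P).eval x = 0
    · have hN : P.natDegree ≠ 0 := fun h0 => hP0 <| by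
        rw [Polynomial.eq_C_of_natDegree_eq_zero h0, Polynomial.eval_C] at hPx
        rw [Polynomial.eq_C_of_natDegree_eq_zero h0, hPx, Polynomial.C_0]
      refine ih _ (h ▸ Polynomial.natDegree_derivative_lt hN)
        (Polynomial.derivative_ne_zero.2 hN) (fun i => ?_) hd rfl
      rw [Polynomial.coeff_derivative]
      exact S.mul_mem (hPS _) (by exact_mod_cast natCast_mem S (i + 1))
    · exact ⟨P, hPS, hPx, hd⟩

end PolynomialRelations

theorem lt_weightedOrder_eval_sub_eval {σ R : Type*} [CommRing R] {w : σ → ℕ}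
    {Q : (MvPowerSeries σ R)[X]} {m r r' : MvPowerSeries σ R} {a k : ℕ}
    (hr : a < r.weightedOrder w) (hr' : a < r'.weightedOrder w)
    (hm : a < (Q.coeff 1 - m).weightedOrder w) (hk : k ≤ (r - r').weightedOrder w) :
    ((a + k : ℕ) : ℕ∞) < ((Q.eval r - m * r) - (Q.eval r' - m * r')).weightedOrder w := by
  set δ := r - r'
  obtain ⟨c, hc⟩ := Polynomial.exists_mul_sq_add_linear_part_eq_eval_add Q r' δ
  obtain ⟨L, hL⟩ := Polynomial.sub_dvd_eval_sub r' 0 (Polynomial.derivative Q)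
  have h1 : (Polynomial.derivative Q).eval 0 = Q.coeff 1 := by
    simp [← Polynomial.coeff_zero_eq_eval_zero, Polynomial.coeff_derivative]
  rw [show r' + δ = r by simp [δ]] at hc
  -- Taylor expansion at `r'`, with the derivative at `r'` congruent to `Q.coeff 1` modulo `r'`
  have key :
      (Q.eval r - m * r) - (Q.eval r' - m * r') = δ * (L * r' + (Q.coeff 1 - m) + c * δ) := by
    linear_combination (-1 : MvPowerSeries σ R) * hc + δ * hL + δ * h1
  have hE : (a : ℕ∞) < (L * r' + (Q.coeff 1 - m) + c * δ).weightedOrder w :=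
    lt_weightedOrder_add (lt_weightedOrder_add (lt_weightedOrder_mul_of_lt_right L hr') hm)
      (lt_weightedOrder_mul_of_lt_right c (lt_weightedOrder_sub hr hr'))
  rw [key]
  calc ((a + k : ℕ) : ℕ∞) = k + a := by push_cast; ring
    _ < k + (L * r' + (Q.coeff 1 - m) + c * δ).weightedOrder w :=
        (ENat.add_lt_add_iff_left (ENat.natCast_ne_top k)).2 hE
    _ ≤ _ := (add_le_add_left hk _).trans (le_weightedOrder_mul w)

section Convergent

variable {n : ℕ}

theorem degree_le_weight {σ : Type*} [Fintype σ] {w : σ → ℕ} (hw : ∀ i, w i ≠ 0)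
    (β : σ →₀ ℕ) : degree β ≤ weight w β := by
  rw [degree_eq_sum, weight_eq_sum]
  exact sum_le_sum fun i _ => by simpa using Nat.le_mul_of_pos_right _ (Nat.pos_of_ne_zero (hw i))

theorem weight_le_mul_degree {σ : Type*} [Fintype σ] (w : σ → ℕ) (β : σ →₀ ℕ) :
    weight w β ≤ (∑ i, w i) * degree β := by
  rw [degree_eq_sum, weight_eq_sum, Finset.mul_sum]
  exact sum_le_sum fun i _ => by
    rw [smul_eq_mul, mul_comm]
    exact Nat.mul_le_mul_right _ (single_le_sum (fun j _ => Nat.zero_le (w j)) (mem_univ i))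

theorem IsConvergent.exists_componentNorm_le {w : Fin n → ℕ} (hw : ∀ i, w i ≠ 0)
    {f : MvPowerSeries (Fin n) ℂ} (hf : IsConvergent f) :
    ∃ M ρ : ℝ, 0 < M ∧ 1 ≤ ρ ∧ ∀ k, componentNorm w f k ≤ M * ρ ^ k := by
  obtain ⟨C, hC, R, hR, hb⟩ := hf
  set R' := max R 1
  refine ⟨C, 2 ^ n * R', hC, one_le_mul_of_one_le_of_one_le (one_le_pow₀ one_le_two)
    (le_max_right _ _), fun k => ?_⟩
  have hcoeff : ∀ β ∈ weightLevel w k, ‖coeff β f‖ ≤ C * R' ^ k := fun β hβ =>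
    calc ‖coeff β f‖ ≤ C * R ^ degree β := hb β
      _ ≤ C * R' ^ degree β := by gcongr; exact le_max_left _ _
      _ ≤ C * R' ^ k := by
        gcongr
        · exact le_max_right _ _
        · exact (degree_le_weight hw β).trans ((mem_weightLevel hw).1 hβ).le
  have hcard : (#(weightLevel w k) : ℝ) ≤ (2 ^ n) ^ k := by
    rw [← pow_mul, mul_comm, pow_mul]
    exact_mod_cast (card_weightLevel_le w k).trans (by
      simpa using Nat.pow_le_pow_left (Nat.lt_two_pow_self (n := k)) n)
  calc componentNorm w f k ≤ #(weightLevel w k) * (C * R' ^ k) := by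
        simpa [componentNorm] using sum_le_sum hcoeff
    _ ≤ (2 ^ n) ^ k * (C * R' ^ k) := by gcongr
    _ = C * (2 ^ n * R') ^ k := by ring

theorem isConvergent_of_componentNorm_le {w : Fin n → ℕ} (hw : ∀ i, w i ≠ 0)
    {f : MvPowerSeries (Fin n) ℂ} {C θ : ℝ} (hC : 0 < C) (hθ : 1 ≤ θ)
    (h : ∀ k, componentNorm w f k ≤ C * θ ^ k) : IsConvergent f :=
  ⟨C, hC, θ ^ ∑ i, w i, by positivity, fun β =>
    calc ‖coeff β f‖ ≤ componentNorm w f (weight w β) := norm_coeff_le_componentNorm hw f β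
      _ ≤ C * θ ^ weight w β := h _
      _ ≤ C * (θ ^ ∑ i, w i) ^ degree β := by
        rw [← pow_mul]
        gcongr
        exact weight_le_mul_degree w β⟩

theorem exists_componentNorm_le_of_forall_isConvergent {w : Fin n → ℕ} (hw : ∀ i, w i ≠ 0)
    (s : Finset (MvPowerSeries (Fin n) ℂ)) (hs : ∀ f ∈ s, IsConvergent f) :
    ∃ M ρ : ℝ, 0 < M ∧ 1 ≤ ρ ∧ ∀ f ∈ s, ∀ k, componentNorm w f k ≤ M * ρ ^ k := by
  choose! M ρ hM hρ hb using fun f hf => (hs f hf).exists_componentNorm_le hw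
  have hMs : 0 ≤ ∑ f ∈ s, M f := sum_nonneg fun f hf => (hM f hf).le
  have hρs : 0 ≤ ∑ f ∈ s, ρ f := sum_nonneg fun f hf => zero_le_one.trans (hρ f hf)
  refine ⟨1 + ∑ f ∈ s, M f, 1 + ∑ f ∈ s, ρ f, by linarith, by linarith, fun f hf k => ?_⟩
  have hMf : M f ≤ 1 + ∑ f ∈ s, M f := by
    linarith [single_le_sum (fun f hf => (hM f hf).le) hf]
  have hρf : ρ f ≤ 1 + ∑ f ∈ s, ρ f := by
    linarith [single_le_sum (fun f hf => zero_le_one.trans (hρ f hf)) hf]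
  calc componentNorm w f k ≤ M f * ρ f ^ k := hb f hf k
    _ ≤ _ := by
      have := hρ f hf
      gcongr

end Convergent

section Subring

variable {n : ℕ}

theorem isConvergent_one : IsConvergent (1 : MvPowerSeries (Fin n) ℂ) :=
  ⟨1, one_pos, 1, one_pos, fun β => by rw [coeff_one]; split_ifs <;> simp⟩

theorem IsConvergent.neg {f : MvPowerSeries (Fin n) ℂ} (hf : IsConvergent f) :
    IsConvergent (-f) := by
  simpa [IsConvergent] using hf

theorem IsConvergent.add {f g : MvPowerSeries (Fin n) ℂ} (hf : IsConvergent f)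
    (hg : IsConvergent g) : IsConvergent (f + g) := by
  classical
  have hw : ∀ _ : Fin n, (1 : ℕ) ≠ 0 := fun _ => one_ne_zero
  obtain ⟨M, ρ, hM, hρ, hb⟩ :=
    exists_componentNorm_le_of_forall_isConvergent hw {f, g} (by simp [hf, hg])
  refine isConvergent_of_componentNorm_le hw (by positivity : 0 < 2 * M) hρ fun k => ?_
  linarith [componentNorm_add_le (fun _ => 1) f g k, hb f (by simp) k, hb g (by simp) k]

theorem IsConvergent.mul {f g : MvPowerSeries (Fin n) ℂ} (hf : IsConvergent f)
    (hg : IsConvergent g) : IsConvergent (f * g) := by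
  classical
  have hw : ∀ _ : Fin n, (1 : ℕ) ≠ 0 := fun _ => one_ne_zero
  obtain ⟨M, ρ, hM, hρ, hb⟩ :=
    exists_componentNorm_le_of_forall_isConvergent hw {f, g} (by simp [hf, hg])
  refine isConvergent_of_componentNorm_le hw (by positivity : 0 < M * M)
    (by linarith : (1 : ℝ) ≤ 2 * ρ) fun k => ?_
  calc componentNorm (fun _ => 1) (f * g) k
      ≤ ∑ x ∈ antidiagonal k, M * ρ ^ x.1 * (M * ρ ^ x.2) :=
        (componentNorm_mul_le hw f g k).trans <| sum_le_sum fun x _ =>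
          mul_le_mul (hb f (by simp) _) (hb g (by simp) _) (componentNorm_nonneg _ _ _)
            (by positivity)
    _ = (k + 1) * (M * M * ρ ^ k) := by
        rw [sum_congr rfl fun x hx => show _ = M * M * ρ ^ k by
          rw [← mem_antidiagonal.1 hx, pow_add]; ring]
        simp
    _ ≤ 2 ^ k * (M * M * ρ ^ k) := by
        gcongr
        exact_mod_cast Nat.lt_two_pow_self
    _ = M * M * (2 * ρ) ^ k := by ring

def convergentSubring (n : ℕ) : Subring (MvPowerSeries (Fin n) ℂ) where
  carrier := {f | IsConvergent f}
  zero_mem' := ⟨1, one_pos, 1, one_pos, fun β => by simp⟩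
  one_mem' := isConvergent_one
  add_mem' := IsConvergent.add
  neg_mem' := IsConvergent.neg
  mul_mem' := IsConvergent.mul

theorem isConvergent_coe (p : MvPolynomial (Fin n) ℂ) :
    IsConvergent (p : MvPowerSeries (Fin n) ℂ) := by
  refine ⟨1 + ∑ γ ∈ p.support, ‖p.coeff γ‖, by positivity, 1, one_pos, fun β => ?_⟩
  rw [MvPolynomial.coeff_coe, one_pow, mul_one]
  by_cases hβ : β ∈ p.support
  · linarith [single_le_sum (fun γ _ => norm_nonneg (p.coeff γ)) hβ]
  · rw [MvPolynomial.notMem_support_iff.1 hβ, norm_zero]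
    positivity

theorem isConvergent_monomial (α : Fin n →₀ ℕ) (c : ℂ) : IsConvergent (monomial α c) := by
  simpa using isConvergent_coe (MvPolynomial.monomial α c)

end Subring

section InvSuccSq

noncomputable def invSuccSq (k : ℕ) : ℝ := (((k : ℝ) + 1) ^ 2)⁻¹

theorem invSuccSq_pos (k : ℕ) : 0 < invSuccSq k := by
  unfold invSuccSq; positivity

theorem invSuccSq_le_one (k : ℕ) : invSuccSq k ≤ 1 :=
  inv_le_one_of_one_le₀ (one_le_pow₀ (by simp))

theorem invSuccSq_antitone : Antitone invSuccSq := fun i k h => by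
  unfold invSuccSq
  gcongr

theorem invSuccSq_le_of_le_mul {i k : ℕ} {c : ℝ} (h : (k : ℝ) + 1 ≤ c * (i + 1)) :
    invSuccSq i ≤ c ^ 2 * invSuccSq k := by
  unfold invSuccSq
  field_simp
  nlinarith

theorem invSuccSq_le_mul_invSuccSq_add (p t : ℕ) :
    invSuccSq t ≤ ((p : ℝ) + 1) ^ 2 * invSuccSq (p + t) :=
  invSuccSq_le_of_le_mul (by push_cast; nlinarith [(Nat.cast_nonneg t : (0 : ℝ) ≤ t)])

theorem sum_range_invSuccSq_le (S : ℕ) : ∑ i ∈ range S, invSuccSq i ≤ 2 := by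
  have h := sum_Ioo_inv_sq_le (α := ℝ) 0 (S + 1)
  rw [← Ico_add_one_left_eq_Ioo, ← sum_Ico_add' (fun i : ℕ => ((i : ℝ) ^ 2)⁻¹) 0 S 1] at h
  norm_num at h
  exact h

theorem sum_antidiagonal_invSuccSq_mul_le (k : ℕ) :
    ∑ x ∈ antidiagonal k, invSuccSq x.1 * invSuccSq x.2 ≤ 16 * invSuccSq k := by
  -- the larger of `i` and `j` is at least `k / 2`, so its factor is at most `4 * invSuccSq k`
  have hterm : ∀ x ∈ antidiagonal k,
      invSuccSq x.1 * invSuccSq x.2 ≤ 4 * invSuccSq k * (invSuccSq x.1 + invSuccSq x.2) := by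
    rintro ⟨i, j⟩ hx
    have hij : (k : ℝ) = i + j := by exact_mod_cast (mem_antidiagonal.1 hx).symm
    have hi := invSuccSq_pos i
    have hj := invSuccSq_pos j
    rcases le_total i j with h | h
    · have : invSuccSq j ≤ 2 ^ 2 * invSuccSq k :=
        invSuccSq_le_of_le_mul (by rw [hij]; linarith [(Nat.cast_le (α := ℝ)).2 h])
      nlinarith
    · have : invSuccSq i ≤ 2 ^ 2 * invSuccSq k :=
        invSuccSq_le_of_le_mul (by rw [hij]; linarith [(Nat.cast_le (α := ℝ)).2 h])
      nlinarith
  have hsum : ∑ x ∈ antidiagonal k, (invSuccSq x.1 + invSuccSq x.2) ≤ 4 := by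
    have h1 : ∑ x ∈ antidiagonal k, invSuccSq x.1 ≤ 2 := by
      rw [Nat.sum_antidiagonal_eq_sum_range_succ_mk]
      exact sum_range_invSuccSq_le _
    have h2 : ∑ x ∈ antidiagonal k, invSuccSq x.2 = ∑ x ∈ antidiagonal k, invSuccSq x.1 :=
      Nat.sum_antidiagonal_swap (f := fun x => invSuccSq x.1)
    rw [sum_add_distrib, h2]
    linarith
  calc ∑ x ∈ antidiagonal k, invSuccSq x.1 * invSuccSq x.2
      ≤ 4 * invSuccSq k * ∑ x ∈ antidiagonal k, (invSuccSq x.1 + invSuccSq x.2) := by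
        rw [Finset.mul_sum]; exact sum_le_sum hterm
    _ ≤ 4 * invSuccSq k * 4 := by gcongr; exact (mul_pos four_pos (invSuccSq_pos k)).le
    _ = 16 * invSuccSq k := by ring

theorem pow_le_pow_mul_invSuccSq {ρ θ : ℝ} (hρ : 0 ≤ ρ) (hρθ : 4 * ρ ≤ θ) (t : ℕ) :
    ρ ^ t ≤ θ ^ t * invSuccSq t := by
  have h4 : ((t : ℝ) + 1) ^ 2 ≤ 4 ^ t := by
    rw [show (4 : ℝ) ^ t = (2 ^ t) ^ 2 by rw [← pow_mul, mul_comm, pow_mul]; norm_num]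
    gcongr
    exact_mod_cast Nat.lt_two_pow_self
  rw [invSuccSq, ← div_eq_mul_inv, le_div_iff₀ (by positivity)]
  calc ρ ^ t * ((t : ℝ) + 1) ^ 2 ≤ ρ ^ t * 4 ^ t := by gcongr
    _ = (4 * ρ) ^ t := by ring
    _ ≤ θ ^ t := by gcongr

theorem pow_add_le_mul_invSuccSq {ρ θ : ℝ} (hρ : 0 ≤ ρ) (hρθ : 4 * ρ ≤ θ) (p t : ℕ) :
    ρ ^ (p + t) ≤ ((p : ℝ) + 1) ^ 2 * ρ ^ p * θ ^ t * invSuccSq (p + t) := by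
  have := invSuccSq_le_mul_invSuccSq_add p t
  have hθ : 0 ≤ θ := by linarith
  calc ρ ^ (p + t) = ρ ^ p * ρ ^ t := pow_add ρ p t
    _ ≤ ρ ^ p * (θ ^ t * (((p : ℝ) + 1) ^ 2 * invSuccSq (p + t))) := by
        gcongr
        exact (pow_le_pow_mul_invSuccSq hρ hρθ t).trans (by gcongr)
    _ = _ := by ring

end InvSuccSq

section ComponentBounds

variable {σ R : Type*} [Fintype σ] [NormedRing R] {w : σ → ℕ} {θ : ℝ}

theorem componentNorm_weightedTrunc (w : σ → ℕ) (f : MvPowerSeries σ R) (k s : ℕ) :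
    componentNorm w (weightedTrunc w k f) s = if s < k then componentNorm w f s else 0 := by
  unfold componentNorm
  split_ifs with h
  · exact sum_congr rfl fun β hβ => by
      rw [coeff_weightedTrunc, (mem_filter.1 hβ).2, if_pos h]
  · exact sum_eq_zero fun β hβ => by
      rw [coeff_weightedTrunc, (mem_filter.1 hβ).2, if_neg h, norm_zero]

theorem componentNorm_mul_le_of_le (hw : ∀ i, w i ≠ 0) (hθ : 0 ≤ θ) {f g : MvPowerSeries σ R}
    {F G : ℝ} (hf : ∀ k, componentNorm w f k ≤ F * θ ^ k * invSuccSq k)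
    (hg : ∀ k, componentNorm w g k ≤ G * θ ^ k * invSuccSq k) (k : ℕ) :
    componentNorm w (f * g) k ≤ 16 * F * G * θ ^ k * invSuccSq k := by
  have hF : 0 ≤ F := by simpa [invSuccSq] using (componentNorm_nonneg w f 0).trans (hf 0)
  have hG : 0 ≤ G := by simpa [invSuccSq] using (componentNorm_nonneg w g 0).trans (hg 0)
  calc componentNorm w (f * g) k
      ≤ ∑ x ∈ antidiagonal k, F * θ ^ x.1 * invSuccSq x.1 * (G * θ ^ x.2 * invSuccSq x.2) :=
        (componentNorm_mul_le hw f g k).trans <| sum_le_sum fun x _ =>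
          mul_le_mul (hf _) (hg _) (componentNorm_nonneg _ _ _)
            (mul_nonneg (by positivity) (invSuccSq_pos _).le)
    _ = F * G * θ ^ k * ∑ x ∈ antidiagonal k, invSuccSq x.1 * invSuccSq x.2 := by
        rw [Finset.mul_sum]
        refine sum_congr rfl fun x hx => ?_
        rw [← mem_antidiagonal.1 hx, pow_add]
        ring
    _ ≤ F * G * θ ^ k * (16 * invSuccSq k) := by
        gcongr
        exact sum_antidiagonal_invSuccSq_mul_le k
    _ = 16 * F * G * θ ^ k * invSuccSq k := by ring

theorem componentNorm_pow_le (hw : ∀ i, w i ≠ 0) (hθ : 0 ≤ θ) {f : MvPowerSeries σ R} {C : ℝ}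
    (hC : 16 * C ≤ 1) (hf : ∀ k, componentNorm w f k ≤ C * θ ^ k * invSuccSq k) (j : ℕ) :
    ∀ k, componentNorm w (f ^ (j + 2)) k ≤ 16 * C ^ 2 * θ ^ k * invSuccSq k := by
  induction j with
  | zero =>
    intro k
    simpa [pow_two, mul_assoc] using componentNorm_mul_le_of_le hw hθ hf hf k
  | succ j ih =>
    intro k
    have hC0 : 0 ≤ C := by simpa [invSuccSq] using (componentNorm_nonneg w f 0).trans (hf 0)
    have hX : 0 ≤ 16 * C ^ 2 * θ ^ k * invSuccSq k :=
      mul_nonneg (by positivity) (invSuccSq_pos k).le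
    calc componentNorm w (f ^ (j + 1 + 2)) k
        ≤ 16 * (16 * C ^ 2) * C * θ ^ k * invSuccSq k := by
          rw [show j + 1 + 2 = j + 2 + 1 by ring, pow_succ]
          exact componentNorm_mul_le_of_le hw hθ ih hf k
      _ = 16 * C * (16 * C ^ 2 * θ ^ k * invSuccSq k) := by ring
      _ ≤ 1 * (16 * C ^ 2 * θ ^ k * invSuccSq k) := by gcongr
      _ = 16 * C ^ 2 * θ ^ k * invSuccSq k := one_mul _

theorem componentNorm_le_of_le_pow {f : MvPowerSeries σ R} {M ρ : ℝ} (hρ : 0 < ρ)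
    (hρθ : 4 * ρ ≤ θ) {p : ℕ} (hp : (p : ℕ∞) ≤ f.weightedOrder w)
    (hf : ∀ k, componentNorm w f k ≤ M * ρ ^ k) (k : ℕ) :
    componentNorm w f k ≤ ((p : ℝ) + 1) ^ 2 * M * (ρ / θ) ^ p * θ ^ k * invSuccSq k := by
  have hM : 0 ≤ M := by simpa using (componentNorm_nonneg w f 0).trans (hf 0)
  have hθ : 0 < θ := by linarith
  rcases lt_or_ge k p with hk | hk
  · rw [componentNorm_eq_zero_of_lt_weightedOrder ((Nat.cast_lt.2 hk).trans_le hp)]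
    exact mul_nonneg (by positivity) (invSuccSq_pos k).le
  · obtain ⟨t, rfl⟩ := exists_add_of_le hk
    calc componentNorm w f (p + t) ≤ M * ρ ^ (p + t) := hf _
      _ ≤ M * (((p : ℝ) + 1) ^ 2 * ρ ^ p * θ ^ t * invSuccSq (p + t)) := by
          gcongr
          exact pow_add_le_mul_invSuccSq hρ.le hρθ p t
      _ = _ := by
          rw [div_pow, pow_add]
          field_simp

end ComponentBounds

section Estimates

variable {σ R : Type*} [Fintype σ] [NormedRing R] {w : σ → ℕ} {M ρ C θ κ : ℝ}
  {a : ℕ}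

theorem componentNorm_constTerm_le {f : MvPowerSeries σ R} (hρ : 0 < ρ) (hρθ : 4 * ρ ≤ θ)
    (hf : ∀ l, componentNorm w f l ≤ M * ρ ^ l)
    (h0 : 4 * (2 * a + 2) ^ 2 * M * ρ ^ (2 * a + 1) ≤ κ * C * θ ^ (a + 1)) (t : ℕ) :
    componentNorm w f (a + (a + 1 + t)) ≤
      κ / 4 * (C * θ ^ (a + 1 + t) * invSuccSq (a + 1 + t)) := by
  have hM : 0 ≤ M := by simpa using (componentNorm_nonneg w f 0).trans (hf 0)
  have hθ : 0 ≤ θ := by linarith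
  calc componentNorm w f (a + (a + 1 + t)) ≤ M * ρ ^ (2 * a + 1 + t) := by
        rw [show a + (a + 1 + t) = 2 * a + 1 + t by ring]; exact hf _
    _ ≤ M * (((2 * a + 1 : ℕ) + 1) ^ 2 * ρ ^ (2 * a + 1) * θ ^ t *
          invSuccSq (2 * a + 1 + t)) := by
        gcongr; exact pow_add_le_mul_invSuccSq hρ.le hρθ _ t
    _ ≤ M * (((2 * a + 1 : ℕ) + 1) ^ 2 * ρ ^ (2 * a + 1) * θ ^ t * invSuccSq (a + 1 + t)) := by
        gcongr; exact invSuccSq_antitone (by omega)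
    _ = 4 * (2 * a + 2) ^ 2 * M * ρ ^ (2 * a + 1) * (θ ^ t * invSuccSq (a + 1 + t)) / 4 := by
        push_cast; ring
    _ ≤ κ * C * θ ^ (a + 1) * (θ ^ t * invSuccSq (a + 1 + t)) / 4 := by
        gcongr; exact mul_nonneg (by positivity) (invSuccSq_pos _).le
    _ = _ := by rw [pow_add θ (a + 1) t]; ring

theorem componentNorm_linearTerm_le (hw : ∀ i, w i ≠ 0) {f g : MvPowerSeries σ R} (hρ : 0 < ρ)
    (hρθ : 4 * ρ ≤ θ) (hf : ∀ l, componentNorm w f l ≤ M * ρ ^ l) (hf0 : a < f.weightedOrder w)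
    (hg : ∀ s, componentNorm w g s ≤ C * θ ^ s * invSuccSq s)
    (h1 : 64 * (a + 2) ^ 2 * M * ρ ^ (a + 1) ≤ κ * θ) (t : ℕ) :
    componentNorm w (f * g) (a + (a + 1 + t)) ≤
      κ / 4 * (C * θ ^ (a + 1 + t) * invSuccSq (a + 1 + t)) := by
  have hθ : 0 < θ := by linarith
  have hC : 0 ≤ C := by simpa [invSuccSq] using (componentNorm_nonneg w g 0).trans (hg 0)
  have hM : 0 ≤ M := by simpa using (componentNorm_nonneg w f 0).trans (hf 0)
  have hf' := componentNorm_le_of_le_pow hρ hρθ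
    (by exact_mod_cast Order.add_one_le_of_lt hf0 : ((a + 1 : ℕ) : ℕ∞) ≤ _) hf
  calc componentNorm w (f * g) (a + (a + 1 + t))
      ≤ 16 * ((((a + 1 : ℕ) : ℝ) + 1) ^ 2 * M * (ρ / θ) ^ (a + 1)) * C *
          θ ^ (a + (a + 1 + t)) * invSuccSq (a + (a + 1 + t)) :=
        componentNorm_mul_le_of_le hw hθ.le hf' hg _
    _ ≤ 16 * ((((a + 1 : ℕ) : ℝ) + 1) ^ 2 * M * (ρ / θ) ^ (a + 1)) * C *
          θ ^ (a + (a + 1 + t)) * invSuccSq (a + 1 + t) := by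
        gcongr; exact invSuccSq_antitone (by omega)
    _ = 64 * (a + 2) ^ 2 * M * ρ ^ (a + 1) * (C * θ ^ (a + t) * invSuccSq (a + 1 + t)) / 4 := by
        rw [div_pow]; field_simp; push_cast; ring
    _ ≤ κ * θ * (C * θ ^ (a + t) * invSuccSq (a + 1 + t)) / 4 := by
        gcongr; exact mul_nonneg (by positivity) (invSuccSq_pos _).le
    _ = _ := by ring

theorem componentNorm_higherTerms_le (hw : ∀ i, w i ≠ 0) {F : ℕ → MvPowerSeries σ R}
    {g : MvPowerSeries σ R} {N : ℕ} (hρ : 0 < ρ) (hρθ : 4 * ρ ≤ θ)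
    (hF : ∀ j l, componentNorm w (F j) l ≤ M * ρ ^ l)
    (hg : ∀ s, componentNorm w g s ≤ C * θ ^ s * invSuccSq s) (hC : 16 * C ≤ 1)
    (h2 : 1024 * N * M * C * θ ^ a ≤ κ) (t : ℕ) :
    ∑ j ∈ range N, componentNorm w (F j * g ^ (j + 2)) (a + (a + 1 + t)) ≤
      κ / 4 * (C * θ ^ (a + 1 + t) * invSuccSq (a + 1 + t)) := by
  have hθ : 0 < θ := by linarith
  have hC0 : 0 ≤ C := by simpa [invSuccSq] using (componentNorm_nonneg w g 0).trans (hg 0)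
  have hM : 0 ≤ M := by simpa using (componentNorm_nonneg w (F 0) 0).trans (hF 0 0)
  have hterm : ∀ j, componentNorm w (F j * g ^ (j + 2)) (a + (a + 1 + t)) ≤
      256 * M * C ^ 2 * θ ^ (a + (a + 1 + t)) * invSuccSq (a + 1 + t) := fun j =>
    calc componentNorm w (F j * g ^ (j + 2)) (a + (a + 1 + t))
        ≤ 16 * M * (16 * C ^ 2) * θ ^ (a + (a + 1 + t)) * invSuccSq (a + (a + 1 + t)) :=
          componentNorm_mul_le_of_le hw hθ.le
            (by simpa using componentNorm_le_of_le_pow hρ hρθ (zero_le (α := ℕ∞)) (hF j))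
            (componentNorm_pow_le hw hθ.le hC hg j) _
      _ ≤ 256 * M * C ^ 2 * θ ^ (a + (a + 1 + t)) * invSuccSq (a + 1 + t) := by
          rw [show 16 * M * (16 * C ^ 2) = 256 * M * C ^ 2 by ring]
          gcongr; exact invSuccSq_antitone (by omega)
  calc ∑ j ∈ range N, componentNorm w (F j * g ^ (j + 2)) (a + (a + 1 + t))
      ≤ N * (256 * M * C ^ 2 * θ ^ (a + (a + 1 + t)) * invSuccSq (a + 1 + t)) := by
        simpa using sum_le_sum fun j (_ : j ∈ range N) => hterm j
    _ = 1024 * N * M * C * θ ^ a * (C * θ ^ (a + 1 + t) * invSuccSq (a + 1 + t)) / 4 := by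
        ring
    _ ≤ κ * (C * θ ^ (a + 1 + t) * invSuccSq (a + 1 + t)) / 4 := by
        gcongr; exact mul_nonneg (by positivity) (invSuccSq_pos _).le
    _ = _ := by ring

end Estimates

section Core

variable {σ : Type*} [Fintype σ] {w : σ → ℕ} {Q : (MvPowerSeries σ ℂ)[X]}
  {r : MvPowerSeries σ ℂ} {α : σ →₀ ℕ} {cc : ℂ} {M ρ C θ : ℝ}

theorem norm_mul_componentNorm_le (hw : ∀ i, w i ≠ 0) (hQ : Q.eval r = 0)
    (hr : weight w α < r.weightedOrder w)
    (hc1 : weight w α < (Q.coeff 1 - monomial α cc).weightedOrder w) (k : ℕ) :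
    ‖cc‖ * componentNorm w r k ≤ componentNorm w
      (Q.eval (weightedTrunc w k r) - monomial α cc * weightedTrunc w k r) (weight w α + k) := by
  set r' := weightedTrunc w k r
  have hord := lt_weightedOrder_eval_sub_eval hr (hr.trans_le (weightedOrder_le_weightedTrunc k))
    hc1 (le_weightedOrder_sub_weightedTrunc k)
  have hcoeff : ∀ β ∈ weightLevel w k,
      ‖cc‖ * ‖coeff β r‖ = ‖coeff (α + β) (Q.eval r' - monomial α cc * r')‖ := by
    intro β hβ
    have h0 := coeff_eq_zero_of_lt_weightedOrder w (d := α + β)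
      (by rwa [map_add, (mem_weightLevel hw).1 hβ])
    rw [map_sub, sub_eq_zero] at h0
    rw [← h0, hQ, zero_sub, map_neg, norm_neg, coeff_add_monomial_mul, norm_mul]
  rw [componentNorm, Finset.mul_sum, sum_congr rfl hcoeff]
  exact sum_norm_coeff_add_le_componentNorm hw _ α k

theorem componentNorm_le_of_forall_lt (hw : ∀ i, w i ≠ 0) (hQ : Q.eval r = 0) (hcc : cc ≠ 0)
    (hr : weight w α < r.weightedOrder w)
    (hc1 : weight w α < (Q.coeff 1 - monomial α cc).weightedOrder w) (hρ : 0 < ρ)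
    (hQM : ∀ j l, componentNorm w (Q.coeff j) l ≤ M * ρ ^ l)
    (hc1M : ∀ l, componentNorm w (Q.coeff 1 - monomial α cc) l ≤ M * ρ ^ l)
    (hρθ : 4 * ρ ≤ θ) (hC0 : 0 ≤ C) (hC : 16 * C ≤ 1)
    (h0 : 4 * (2 * weight w α + 2) ^ 2 * M * ρ ^ (2 * weight w α + 1) ≤
      ‖cc‖ * C * θ ^ (weight w α + 1))
    (h1 : 64 * (weight w α + 2) ^ 2 * M * ρ ^ (weight w α + 1) ≤ ‖cc‖ * θ)
    (h2 : 1024 * Q.natDegree * M * C * θ ^ weight w α ≤ ‖cc‖) {k : ℕ}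
    (ih : ∀ s < k, componentNorm w r s ≤ C * θ ^ s * invSuccSq s) :
    componentNorm w r k ≤ C * θ ^ k * invSuccSq k := by
  have hθ : 0 ≤ θ := by linarith
  rcases le_or_gt k (weight w α) with hk | hk
  · rw [componentNorm_eq_zero_of_lt_weightedOrder ((Nat.cast_le.2 hk).trans_lt hr)]
    exact mul_nonneg (by positivity) (invSuccSq_pos k).le
  obtain ⟨t, rfl⟩ : ∃ t, k = weight w α + 1 + t := ⟨k - (weight w α + 1), by omega⟩
  set r' := weightedTrunc w (weight w α + 1 + t) r
  have hr' : ∀ s, componentNorm w r' s ≤ C * θ ^ s * invSuccSq s := fun s => by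
    rw [componentNorm_weightedTrunc]
    split_ifs with hs
    · exact ih s hs
    · exact mul_nonneg (by positivity) (invSuccSq_pos s).le
  -- `‖cc‖ |r|_k` is bounded by the constant, linear and higher parts of `Q` at the truncation `r'`;
  -- `h0`, `h1` and `h2` make each of them at most a quarter of `‖cc‖ C θ^k / (k + 1)²`.
  have hsplit := norm_mul_componentNorm_le hw hQ hr hc1 (weight w α + 1 + t)
  rw [Polynomial.eval_sub_mul_eq] at hsplit
  have hsum : componentNorm w (Q.coeff 0 + (Q.coeff 1 - monomial α cc) * r' +
        ∑ j ∈ range Q.natDegree, Q.coeff (j + 2) * r' ^ (j + 2)) (weight w α + (weight w α + 1 + t))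
      ≤ componentNorm w (Q.coeff 0) (weight w α + (weight w α + 1 + t)) +
        componentNorm w ((Q.coeff 1 - monomial α cc) * r') (weight w α + (weight w α + 1 + t)) +
        ∑ j ∈ range Q.natDegree,
          componentNorm w (Q.coeff (j + 2) * r' ^ (j + 2)) (weight w α + (weight w α + 1 + t)) :=
    (componentNorm_add_le w _ _ _).trans
      (add_le_add (componentNorm_add_le w _ _ _) (componentNorm_sum_le w _ _ _))
  have hconst := componentNorm_constTerm_le hρ hρθ (hQM 0) h0 t
  have hlin := componentNorm_linearTerm_le hw hρ hρθ hc1M hc1 hr' h1 t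
  have hhigh := componentNorm_higherTerms_le hw (F := fun j => Q.coeff (j + 2)) hρ hρθ
    (fun j => hQM (j + 2)) hr' hC h2 t
  have hX : 0 ≤ C * θ ^ (weight w α + 1 + t) * invSuccSq (weight w α + 1 + t) :=
    mul_nonneg (by positivity) (invSuccSq_pos _).le
  refine le_of_mul_le_mul_left ?_ (norm_pos_iff.2 hcc)
  linarith [mul_nonneg (norm_nonneg cc) hX]

end Core

theorem exists_induction_constants {M ρ κ : ℝ} (hM : 0 < M) (hρ : 0 < ρ) (hκ : 0 < κ)
    (a N : ℕ) :
    ∃ C θ : ℝ, 0 < C ∧ 1 ≤ θ ∧ 4 * ρ ≤ θ ∧ 16 * C ≤ 1 ∧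
      4 * (2 * a + 2) ^ 2 * M * ρ ^ (2 * a + 1) ≤ κ * C * θ ^ (a + 1) ∧
      64 * (a + 2) ^ 2 * M * ρ ^ (a + 1) ≤ κ * θ ∧
      1024 * N * M * C * θ ^ a ≤ κ := by
  -- `C θ ^ (a + 1) = K` turns the first inequality into an equality; the rest only need `θ` large
  set K := 4 * (2 * a + 2) ^ 2 * M * ρ ^ (2 * a + 1) / κ
  set θ := 1 + 4 * ρ + 64 * (a + 2) ^ 2 * M * ρ ^ (a + 1) / κ + 16 * K + 1024 * N * M * K / κ
  have hK : 0 < K := by positivity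
  have hA : 0 ≤ 64 * (a + 2) ^ 2 * M * ρ ^ (a + 1) / κ := by positivity
  have hB : 0 ≤ 1024 * N * M * K / κ := by positivity
  have hθ : 1 ≤ θ := by linarith
  have hθpos : 0 < θ := by linarith
  refine ⟨K / θ ^ (a + 1), θ, by positivity, hθ, by linarith, ?_, le_of_eq ?_, ?_, ?_⟩
  · rw [mul_div_assoc', div_le_one (by positivity)]
    linarith [le_self_pow₀ hθ (by omega : a + 1 ≠ 0)]
  · simp only [K]
    field_simp
  · rw [← div_le_iff₀' hκ]
    linarith
  · rw [show 1024 * N * M * (K / θ ^ (a + 1)) * θ ^ a = 1024 * N * M * K / θ by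
      field_simp; ring, div_le_iff₀ hθpos, ← div_le_iff₀' hκ]
    linarith

theorem isConvergent_of_eval_eq_zero {n : ℕ} {w : Fin n → ℕ} (hw : ∀ i, w i ≠ 0)
    {Q : (MvPowerSeries (Fin n) ℂ)[X]} (hQc : ∀ j, IsConvergent (Q.coeff j))
    {r : MvPowerSeries (Fin n) ℂ} (hQ : Q.eval r = 0) {α : Fin n →₀ ℕ} {cc : ℂ} (hcc : cc ≠ 0)
    (hr : weight w α < r.weightedOrder w)
    (hc1 : weight w α < (Q.coeff 1 - monomial α cc).weightedOrder w) : IsConvergent r := by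
  classical
  obtain ⟨M, ρ, hM, hρ, hb⟩ := exists_componentNorm_le_of_forall_isConvergent hw
    (insert (Q.coeff 1 - monomial α cc) (insert 0 Q.coeffs)) (by
      simp only [mem_insert, Polynomial.mem_coeffs_iff, forall_eq_or_imp]
      refine ⟨(convergentSubring n).sub_mem (hQc 1) (isConvergent_monomial α cc),
        (convergentSubring n).zero_mem, ?_⟩
      rintro f ⟨j, -, rfl⟩
      exact hQc j)
  have hQM : ∀ j l, componentNorm w (Q.coeff j) l ≤ M * ρ ^ l := fun j => by
    by_cases h : Q.coeff j = 0
    · exact hb _ (by simp [h])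
    · exact hb _ (mem_insert_of_mem (mem_insert_of_mem (Polynomial.coeff_mem_coeffs h)))
  obtain ⟨C, θ, hC0, hθ, hρθ, hC, h0, h1, h2⟩ :=
    exists_induction_constants hM (by linarith) (norm_pos_iff.2 hcc) (weight w α) Q.natDegree
  have hbound : ∀ k, componentNorm w r k ≤ C * θ ^ k * invSuccSq k := fun k =>
    Nat.strong_induction_on k fun k ih =>
      componentNorm_le_of_forall_lt hw hQ hcc hr hc1 (by linarith) hQM (hb _ (mem_insert_self _ _))
        hρθ hC0.le hC h0 h1 h2 ih
  exact isConvergent_of_componentNorm_le hw hC0 hθ fun k =>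
    (hbound k).trans (mul_le_of_le_one_right (by positivity) (invSuccSq_le_one k))

section Isolation

variable {n : ℕ}

theorem sum_mul_pow_lt {D : ℕ} {β : Fin n → ℕ} (hβ : ∀ i, β i < D) :
    ∑ i, β i * D ^ (i : ℕ) < D ^ n := by
  simpa [finFunctionFinEquiv_apply] using (finFunctionFinEquiv fun i => (⟨β i, hβ i⟩ : Fin D)).isLt

theorem eq_of_sum_mul_pow_eq {D : ℕ} {β γ : Fin n → ℕ} (hβ : ∀ i, β i < D) (hγ : ∀ i, γ i < D)
    (h : ∑ i, β i * D ^ (i : ℕ) = ∑ i, γ i * D ^ (i : ℕ)) : β = γ := by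
  have : (fun i => (⟨β i, hβ i⟩ : Fin D)) = fun i => ⟨γ i, hγ i⟩ :=
    finFunctionFinEquiv.injective (Fin.ext (by simpa [finFunctionFinEquiv_apply] using h))
  funext i
  exact congrArg (fun φ : Fin n → Fin D => (φ i : ℕ)) this

/-- On multi-indices with entries below `D` these weights compare total degrees first, and are
injective within each total degree. -/
def digitWeight (n D : ℕ) : Fin n → ℕ := fun i => D ^ n + D ^ (i : ℕ)

theorem weight_digitWeight (D : ℕ) (β : Fin n →₀ ℕ) :
    weight (digitWeight n D) β = D ^ n * degree β + ∑ i, β i * D ^ (i : ℕ) := by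
  simp only [weight_eq_sum, degree_eq_sum, digitWeight, smul_eq_mul, Finset.mul_sum,
    ← sum_add_distrib]
  exact sum_congr rfl fun i _ => by ring

theorem degree_le_of_weight_digitWeight_le {D : ℕ} {α γ : Fin n →₀ ℕ} (hα : ∀ i, α i < D)
    (h : weight (digitWeight n D) γ ≤ weight (digitWeight n D) α) : degree γ ≤ degree α := by
  rw [weight_digitWeight, weight_digitWeight] at h
  have := sum_mul_pow_lt hα
  have : D ^ n * degree γ < D ^ n * (degree α + 1) := by
    rw [mul_add, mul_one]
    linarith [Nat.zero_le (∑ i, γ i * D ^ (i : ℕ))]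
  exact Nat.lt_succ_iff.1 (Nat.lt_of_mul_lt_mul_left this)

theorem eq_of_weight_digitWeight_eq {D : ℕ} {α γ : Fin n →₀ ℕ} (hα : ∀ i, α i < D)
    (hγ : ∀ i, γ i < D) (hdeg : degree γ = degree α)
    (h : weight (digitWeight n D) γ = weight (digitWeight n D) α) : γ = α := by
  rw [weight_digitWeight, weight_digitWeight, hdeg, Nat.add_left_cancel_iff] at h
  exact DFunLike.coe_injective (eq_of_sum_mul_pow_eq hγ hα h)

theorem exists_weight_isolating_monomial {R : Type*} [Ring R] {f : MvPowerSeries (Fin n) R}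
    (hf : f ≠ 0) :
    ∃ (w : Fin n → ℕ) (α : Fin n →₀ ℕ), (∀ i, w i ≠ 0) ∧ coeff α f ≠ 0 ∧
      (weight w α : ℕ∞) < (f - monomial α (coeff α f)).weightedOrder w ∧
      ∀ γ, weight w γ ≤ weight w α → degree γ ≤ degree α := by
  classical
  obtain ⟨β, hβ, hβdeg⟩ := exists_coeff_ne_zero_and_order (ne_zero_iff_order_finite.1 hf)
  have hmin : ∀ γ, coeff γ f ≠ 0 → degree β ≤ degree γ := fun γ hγ => by
    exact_mod_cast hβdeg.trans_le (order_le hγ)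
  set w := digitWeight n (degree β + 1)
  set S := {γ ∈ (finite_of_degree_eq (σ := Fin n) (degree β)).toFinset | coeff γ f ≠ 0}
  obtain ⟨α, hαS, hαmin⟩ := S.exists_min_image (weight w) ⟨β, by simp [S, hβ]⟩
  simp only [S, mem_filter, Set.Finite.mem_toFinset, Set.mem_ofPred_eq] at hαS
  have hdigits : ∀ γ : Fin n →₀ ℕ, degree γ ≤ degree β → ∀ i, γ i < degree β + 1 :=
    fun γ hγ i => Nat.lt_succ_of_le ((le_degree i γ).trans hγ)
  have hα := hdigits α hαS.1.le
  have hsep := fun γ => degree_le_of_weight_digitWeight_le (γ := γ) hα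
  refine ⟨w, α, fun i => by simp [w, digitWeight], hαS.2, ?_, hsep⟩
  refine (Nat.cast_lt.2 (Nat.lt_succ_self _)).trans_le (nat_le_weightedOrder w fun γ hγ => ?_)
  rw [map_sub, coeff_monomial]
  split_ifs with hγα
  · rw [hγα, sub_self]
  · rw [sub_zero]
    by_contra hγf
    have hγdeg : degree γ = degree α :=
      le_antisymm (hsep γ (Nat.lt_succ_iff.1 hγ)) (hαS.1 ▸ hmin γ hγf)
    refine hγα (eq_of_weight_digitWeight_eq hα (hdigits γ (hγdeg.trans hαS.1).le) hγdeg ?_)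
    exact le_antisymm (Nat.lt_succ_iff.1 hγ) (hαmin γ (by simp [S, hγdeg, hαS.1, hγf]))

end Isolation

theorem algebraic_over_convergent_is_convergent_general
    (n : ℕ) (g : MvPowerSeries (Fin n) ℂ)
    (d : ℕ) (f : ℕ → MvPowerSeries (Fin n) ℂ)
    (hconv : ∀ i ≤ d, IsConvergent (f i))
    (hne : ∃ i ≤ d, f i ≠ 0)
    (heq : ∑ i ∈ Finset.range (d + 1), f i * g ^ (d - i) = 0) :
    IsConvergent g := by
  have := IsAddTorsionFree.of_module_rat (MvPowerSeries (Fin n) ℂ)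
  obtain ⟨P₀, hP₀, hP₀S, hP₀g⟩ :=
    exists_polynomial_of_sum_mul_pow_eq_zero (convergentSubring n) hconv hne heq
  obtain ⟨P, hPS, hPg, hP'g⟩ := exists_eval_eq_zero_eval_derivative_ne_zero _ hP₀ hP₀S hP₀g
  obtain ⟨w, α, hw, hα, hiso, hdeg⟩ := exists_weight_isolating_monomial hP'g
  set g₀ : MvPowerSeries (Fin n) ℂ := ↑(truncTotal (degree α + 1) g)
  have hg₀ : IsConvergent g₀ := isConvergent_coe _
  set r := g - g₀
  have hr : (weight w α : ℕ∞) < r.weightedOrder w :=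
    (Nat.cast_lt.2 (Nat.lt_succ_self _)).trans_le (nat_le_weightedOrder w fun γ hγ => by
      rw [map_sub, MvPolynomial.coeff_coe,
        coeff_truncTotal _ (Nat.lt_succ_of_le (hdeg γ (Nat.lt_succ_iff.1 hγ))), sub_self])
  -- the linear Taylor coefficient at `g₀` agrees with `P'(g)` modulo `r = g - g₀`
  obtain ⟨L, hL⟩ := Polynomial.sub_dvd_eval_sub g g₀ (Polynomial.derivative P)
  set cc := coeff α ((Polynomial.derivative P).eval g)
  have hc1 : weight w α < ((P.taylor g₀).coeff 1 - monomial α cc).weightedOrder w := by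
    rw [Polynomial.taylor_coeff_one,
      ← sub_sub_sub_cancel_left _ _ ((Polynomial.derivative P).eval g), hL]
    exact lt_weightedOrder_sub hiso (mul_comm r L ▸ lt_weightedOrder_mul_of_lt_right L hr)
  have hrc := isConvergent_of_eval_eq_zero hw (coeff_taylor_mem (convergentSubring n) hPS hg₀)
    (by rw [Polynomial.taylor_eval, sub_add_cancel, hPg]) hα hr hc1
  simpa [r] using hg₀.add hrc

/-- If `g ∈ ℂ[[x₁,…,xₙ]]` satisfies a nontrivial polynomial relation
`f₀·g^d + f₁·g^{d-1} + ⋯ + f_d = 0` whose coefficients `f₀,…,f_d` are convergent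
power series (not all zero), then `g` is itself convergent; i.e.
`closure(ℂ{x₁,…,xₙ}) ∩ ℂ[[x₁,…,xₙ]] = ℂ{x₁,…,xₙ}`. -/
theorem algebraic_over_convergent_is_convergent
    (n : ℕ) (hn : 1 ≤ n) (g : MvPowerSeries (Fin n) ℂ)
    (d : ℕ) (hd : 1 ≤ d) (f : ℕ → MvPowerSeries (Fin n) ℂ)
    (hconv : ∀ i ≤ d, IsConvergent (f i))
    (hne : ∃ i ≤ d, f i ≠ 0)
    (heq : ∑ i ∈ Finset.range (d + 1), f i * g ^ (d - i) = 0) :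
    IsConvergent g :=
  algebraic_over_convergent_is_convergent_general n g d f hconv hne heq
end

section
/- Let n ∈ ℕ, M ≥ 0, η > 0, and set ε = η/e. Let c : (ℕ →₀ ℕ) → ℂ be a family of coefficients indexed by finitely supported multi-indices such that |c_m| ≤ M · e^{n·Σᵢ i·m(i)} · η^{−|m|} · ∏ᵢ (i!)^{−m(i)} for every m, where |m| = Σᵢ m(i). Then for every sequence a : ℕ → ℂ with |aᵢ| ≤ ε · i! · e^{−(n+1)·i} for all i, the family m ↦ c_m · ∏ᵢ aᵢ^{m(i)} is absolutely summable, with Σ_m |c_m · ∏ᵢ aᵢ^{m(i)}| ≤ M · ∏'_{i∈ℕ} (1 − e^{−(i+1)})^{−1}. -/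
/-!
With the polyradii `R i = i! · e^{-n i} · η`, the hypothesis on `c` reads
`‖c m‖ ≤ M · ∏ᵢ R i ^ (-m i)` and the one on `a` reads `‖a i‖ ≤ R i · e^{-(i+1)}`, so the `m`-th
term is at most `M · ∏ᵢ r i ^ m i` with `r i = e^{-(i+1)}`. Every finite set of multi-indices lies
in a box `∏ᵢ [0, Bᵢ]`, over which these geometric weights sum to `∏ᵢ ∑_{k ≤ Bᵢ} r i ^ k`, hence to
at most `∏ᵢ (1 - r i)⁻¹`; this infinite product converges because `∑ r i < ∞`.
-/

open Finset

theorem Finset.sum_finsupp_prod {ι α R : Type*} [Zero α] [CommSemiring R]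
    (s : Finset ι) (t : ι → Finset α) (g : ι → α → R) :
    ∑ m ∈ s.finsupp t, ∏ i ∈ s, g i (m i) = ∏ i ∈ s, ∑ k ∈ t i, g i k := by
  classical
  rw [Finset.finsupp, sum_map, prod_sum]
  refine sum_congr rfl fun p _ => ?_
  rw [← prod_attach s]
  refine prod_congr rfl fun i _ => ?_
  simp [Finsupp.indicator_of_mem i.2]

theorem Real.prod_le_tprod_of_one_le {ι : Type*} {f : ι → ℝ} (hf : ∀ i, 1 ≤ f i)
    (hlog : Summable fun i => Real.log (f i)) (s : Finset ι) : ∏ i ∈ s, f i ≤ ∏' i, f i := by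
  have hpos i : 0 < f i := one_pos.trans_le (hf i)
  rw [← Real.rexp_tsum_eq_tprod hpos hlog, ← Real.exp_log (prod_pos fun i _ => hpos i),
    Real.log_prod fun i _ => (hpos i).ne']
  exact Real.exp_le_exp.2 (hlog.sum_le_tsum s fun i _ => Real.log_nonneg (hf i))

section GeometricMultiIndex

variable {ι : Type*} {r : ι → ℝ}

theorem sum_finsupp_prod_pow_le_prod_inv_one_sub (hr₀ : ∀ i, 0 ≤ r i) (hr₁ : ∀ i, r i < 1)
    (S : Finset (ι →₀ ℕ)) :
    ∑ m ∈ S, (m.prod fun i k => r i ^ k) ≤ ∏ i ∈ (S.sup id).support, (1 - r i)⁻¹ := by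
  set B := S.sup id
  set box := B.support.finsupp fun i => Iic (B i)
  have hS : S ⊆ box := fun m hm => by
    have hmB : m ≤ B := le_sup (f := id) hm
    exact mem_finsupp_iff.2 ⟨Finsupp.support_mono hmB, fun i _ => mem_Iic.2 (hmB i)⟩
  calc ∑ m ∈ S, (m.prod fun i k => r i ^ k)
      ≤ ∑ m ∈ box, (m.prod fun i k => r i ^ k) :=
        sum_le_sum_of_subset_of_nonneg hS fun m _ _ =>
          prod_nonneg fun i _ => pow_nonneg (hr₀ i) _
    _ = ∑ m ∈ box, ∏ i ∈ B.support, r i ^ m i :=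
        sum_congr rfl fun m hm =>
          Finsupp.prod_of_support_subset m (mem_finsupp_iff.1 hm).1 _ fun _ _ => pow_zero _
    _ = ∏ i ∈ B.support, ∑ k ∈ Iic (B i), r i ^ k := sum_finsupp_prod _ _ _
    _ ≤ ∏ i ∈ B.support, (1 - r i)⁻¹ := by
        refine prod_le_prod (fun i _ => sum_nonneg fun k _ => pow_nonneg (hr₀ i) k) fun i _ => ?_
        rw [← tsum_geometric_of_lt_one (hr₀ i) (hr₁ i)]
        exact (summable_geometric_of_lt_one (hr₀ i) (hr₁ i)).sum_le_tsum _
          fun k _ => pow_nonneg (hr₀ i) k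

theorem sum_finsupp_prod_pow_le_tprod (hr₀ : ∀ i, 0 ≤ r i) (hr₁ : ∀ i, r i < 1)
    (hr : Summable r) (S : Finset (ι →₀ ℕ)) :
    ∑ m ∈ S, (m.prod fun i k => r i ^ k) ≤ ∏' i, (1 - r i)⁻¹ := by
  have hlog : Summable fun i => Real.log (1 - r i)⁻¹ := by
    simpa [Real.log_inv, sub_eq_add_neg] using (Real.summable_log_one_add_of_summable hr.neg).neg
  refine (sum_finsupp_prod_pow_le_prod_inv_one_sub hr₀ hr₁ S).trans
    (Real.prod_le_tprod_of_one_le (fun i => ?_) hlog _)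
  exact (one_le_inv₀ (sub_pos.2 (hr₁ i))).2 (sub_le_self _ (hr₀ i))

end GeometricMultiIndex

theorem norm_mul_prod_pow_le {ι 𝕜 : Type*} [NormedCommRing 𝕜] [NormOneClass 𝕜] {c : 𝕜}
    {a : ι → 𝕜} {M : ℝ} {R r : ι → ℝ} (m : ι →₀ ℕ) (hR : ∀ i, R i ≠ 0)
    (hc : ‖c‖ ≤ M * m.prod fun i k => (R i)⁻¹ ^ k) (ha : ∀ i, ‖a i‖ ≤ R i * r i) :
    ‖c * m.prod fun i k => a i ^ k‖ ≤ M * m.prod fun i k => r i ^ k := by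
  have hprod : ‖m.prod fun i k => a i ^ k‖ ≤ m.prod fun i k => (R i * r i) ^ k :=
    (Finset.norm_prod_le _ _).trans <| prod_le_prod (fun _ _ => norm_nonneg _) fun i _ =>
      (norm_pow_le _ _).trans (pow_le_pow_left₀ (norm_nonneg _) (ha i) _)
  calc ‖c * m.prod fun i k => a i ^ k‖
      ≤ (M * m.prod fun i k => (R i)⁻¹ ^ k) * m.prod fun i k => (R i * r i) ^ k :=
        (norm_mul_le _ _).trans <|
          mul_le_mul hc hprod (norm_nonneg _) ((norm_nonneg _).trans hc)
    _ = M * m.prod fun i k => r i ^ k := by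
        rw [mul_assoc, ← Finsupp.prod_mul]
        simp_rw [← mul_pow, inv_mul_cancel_left₀ (hR _)]

noncomputable def polyradius (n : ℕ) (η : ℝ) (j : ℕ) : ℝ :=
  j.factorial * Real.exp (-(n * j)) * η

theorem polyradius_pos (n : ℕ) {η : ℝ} (hη : 0 < η) (j : ℕ) : 0 < polyradius n η j := by
  unfold polyradius
  positivity

theorem cauchy_weight_eq_prod_inv_polyradius (n : ℕ) (η : ℝ) (m : ℕ →₀ ℕ) :
    Real.exp ((n : ℝ) * (m.sum fun i k => (i : ℝ) * k)) * (η ^ (m.sum fun _ k => k))⁻¹ *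
        (m.prod fun i k => (i.factorial : ℝ) ^ k)⁻¹ =
      m.prod fun i k => (polyradius n η i)⁻¹ ^ k := by
  simp only [Finsupp.sum, Finsupp.prod, polyradius]
  rw [mul_sum, Real.exp_sum, ← prod_pow_eq_pow_sum, ← prod_inv_distrib, ← prod_inv_distrib,
    ← prod_mul_distrib, ← prod_mul_distrib]
  refine prod_congr rfl fun i _ => ?_
  rw [mul_inv, mul_inv, Real.exp_neg, inv_inv, mul_pow, mul_pow, inv_pow, inv_pow,
    ← Real.exp_nat_mul]
  ring_nf

theorem div_exp_one_mul_factorial_mul_exp_eq (n : ℕ) (η : ℝ) (i : ℕ) :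
    η / Real.exp 1 * (i.factorial : ℝ) * Real.exp (-((n : ℝ) + 1) * i) =
      polyradius n η i * Real.exp (-((i : ℝ) + 1)) := by
  rw [polyradius, div_eq_mul_inv, ← Real.exp_neg, show -((n : ℝ) + 1) * i = -(n * i) + -i by ring,
    show -((i : ℝ) + 1) = -i + -1 by ring, Real.exp_add, Real.exp_add]
  ring

/-- Let `ε = η/e`. If the coefficients `c_m` satisfy
`|c_m| ≤ M · e^{n·Σᵢ i·m(i)} · η^{−|m|} · ∏ᵢ (i!)^{−m(i)}`, then for every sequence
`a : ℕ → ℂ` with `|aᵢ| ≤ ε · i! · e^{−(n+1)·i}`, the family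
`m ↦ c_m · ∏ᵢ aᵢ^{m(i)}` is absolutely summable with
`Σ_m |c_m · ∏ᵢ aᵢ^{m(i)}| ≤ M · ∏'_{i∈ℕ} (1 − e^{−(i+1)})⁻¹`. -/
theorem monomial_taylor_expansion_bound
    (n : ℕ) (M : ℝ) (hM : 0 ≤ M) (η : ℝ) (hη : 0 < η)
    (ε : ℝ) (hε : ε = η / Real.exp 1)
    (c : (ℕ →₀ ℕ) → ℂ)
    (hc : ∀ m : ℕ →₀ ℕ,
      ‖c m‖ ≤ M * Real.exp ((n : ℝ) * (m.sum fun i k => (i : ℝ) * k)) *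
        (η ^ (m.sum fun _ k => k))⁻¹ * (m.prod fun i k => ((i.factorial : ℝ)) ^ k)⁻¹)
    (a : ℕ → ℂ)
    (ha : ∀ i : ℕ, ‖a i‖ ≤ ε * (i.factorial : ℝ) * Real.exp (-(((n : ℝ) + 1)) * i)) :
    Summable (fun m : ℕ →₀ ℕ => ‖c m * m.prod fun i k => (a i) ^ k‖) ∧
    (∑' m : ℕ →₀ ℕ, ‖c m * m.prod fun i k => (a i) ^ k‖) ≤
      M * ∏' i : ℕ, (1 - Real.exp (-((i : ℝ) + 1)))⁻¹ := by
  subst hε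
  set r : ℕ → ℝ := fun i => Real.exp (-((i : ℝ) + 1))
  have hr : Summable r := by
    simpa [r, neg_add_rev] using (summable_nat_add_iff 1).2 Real.summable_exp_neg_nat
  have hbound := sum_finsupp_prod_pow_le_tprod (fun _ => (Real.exp_pos _).le)
    (fun i => Real.exp_lt_one_iff.2 (neg_neg_of_pos (by positivity))) hr
  have hterm (m : ℕ →₀ ℕ) : ‖c m * m.prod fun i k => a i ^ k‖ ≤ M * m.prod fun i k => r i ^ k :=
    norm_mul_prod_pow_le m (fun i => (polyradius_pos n hη i).ne')
      ((hc m).trans_eq (by rw [← cauchy_weight_eq_prod_inv_polyradius]; ring))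
      (fun i => (ha i).trans_eq (div_exp_one_mul_factorial_mul_exp_eq n η i))
  have hgeom : Summable fun m : ℕ →₀ ℕ => m.prod fun i k => r i ^ k :=
    summable_of_sum_le (fun m => prod_nonneg fun i _ => pow_nonneg (Real.exp_pos _).le _) hbound
  have hsum := (hgeom.mul_left M).of_nonneg_of_le (fun m => norm_nonneg _) hterm
  refine ⟨hsum, ?_⟩
  calc (∑' m : ℕ →₀ ℕ, ‖c m * m.prod fun i k => (a i) ^ k‖)
      ≤ ∑' m : ℕ →₀ ℕ, M * m.prod fun i k => r i ^ k :=
        hsum.tsum_le_tsum hterm (hgeom.mul_left M)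
    _ = M * ∑' m : ℕ →₀ ℕ, m.prod fun i k => r i ^ k := tsum_mul_left
    _ ≤ M * ∏' i : ℕ, (1 - r i)⁻¹ :=
        mul_le_mul_of_nonneg_left (hgeom.tsum_le_of_sum_le hbound) hM
end

section
/- Let p ∈ ℕ and R > 0, and let (a^{(l)})_{l∈ℕ} be a sequence of sequences a^{(l)} : ℕ → ℂ satisfying the uniform bound |a^{(l)}_j| ≤ R · j! · e^{−(p+1)·j} for all l and all j. Then there exists a strictly increasing function φ : ℕ → ℕ and a sequence a : ℕ → ℂ with |a_j| ≤ R · j! · e^{−(p+1)·j} for all j, such that the subsequence (a^{(φ(l))}) converges to a in the weighted sup-norm ‖b‖_{∞,p} = sup_j (|b_j| · e^{p·j} / j!), i.e. lim_{l→∞} ‖a^{(φ(l))} − a‖_{∞,p} = 0. -/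
open scoped ENNReal

/-- The weighted sup-norm `‖b‖_{∞,p} = sup_j (|b_j| · e^{p·j} / j!) ∈ [0,∞]`
of a sequence `b : ℕ → ℂ`. -/
noncomputable def wsupNorm (p : ℕ) (b : ℕ → ℂ) : ℝ≥0∞ :=
  ⨆ j : ℕ, ENNReal.ofReal (‖b j‖ * Real.exp ((p : ℝ) * j) / (j.factorial : ℝ))

/-!
The bound places every `a l` in the product of closed balls `∏ⱼ B̄(0, R · j! · e^{-(p+1)j})`,
which is compact (Tychonoff) and metrizable, so a subsequence converges coordinatewise.
Coordinatewise convergence upgrades to convergence in `‖·‖_{∞,p}` because the weighted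
differences are dominated by `2R · e^{-j}`: the tail `j ≥ N` is uniformly small, and the
finitely many remaining coordinates converge.
-/

open Filter Topology Metric

theorem exists_strictMono_tendsto_of_forall_norm_le {ι E : Type*} [Countable ι]
    [NormedAddCommGroup E] [ProperSpace E] {r : ι → ℝ} {a : ℕ → ι → E}
    (ha : ∀ l j, ‖a l j‖ ≤ r j) :
    ∃ φ : ℕ → ℕ, StrictMono φ ∧ ∃ b : ι → E, (∀ j, ‖b j‖ ≤ r j) ∧
      Tendsto (fun l => a (φ l)) atTop (𝓝 b) := by
  have hK : IsCompact (Set.univ.pi fun j => closedBall (0 : E) (r j)) :=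
    isCompact_univ_pi fun j => isCompact_closedBall _ _
  obtain ⟨b, hb, φ, hφ, hconv⟩ :=
    hK.isSeqCompact fun l j _ => mem_closedBall_zero_iff.2 (ha l j)
  exact ⟨φ, hφ, b, fun j => mem_closedBall_zero_iff.1 (hb j trivial), hconv⟩

theorem ENNReal.tendsto_iSup_nhds_zero_of_le {α ι : Type*} {L : Filter α} {u : α → ι → ℝ≥0∞}
    {g : ι → ℝ≥0∞} (hu : ∀ j, Tendsto (fun l => u l j) L (𝓝 0))
    (hg : Tendsto g cofinite (𝓝 0)) (hle : ∀ l j, u l j ≤ g j) :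
    Tendsto (fun l => ⨆ j, u l j) L (𝓝 0) := by
  rw [ENNReal.tendsto_nhds_zero] at hg ⊢
  intro ε hε
  have hfin : {j | ¬ g j ≤ ε}.Finite := eventually_cofinite.1 (hg ε hε)
  filter_upwards [(eventually_all_finite hfin).2 fun j _ =>
    ENNReal.tendsto_nhds_zero.1 (hu j) ε hε] with l hl
  refine iSup_le fun j => ?_
  by_cases hj : g j ≤ ε
  · exact (hle l j).trans hj
  · exact hl j hj

theorem norm_mul_exp_div_factorial_le {c : ℂ} {S : ℝ} {p j : ℕ}
    (hc : ‖c‖ ≤ S * j.factorial * Real.exp (-((p : ℝ) + 1) * j)) :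
    ‖c‖ * Real.exp ((p : ℝ) * j) / j.factorial ≤ S * Real.exp (-(j : ℝ)) := by
  have hexp : Real.exp (-((p : ℝ) + 1) * j) * Real.exp ((p : ℝ) * j) = Real.exp (-(j : ℝ)) := by
    rw [← Real.exp_add]; ring_nf
  rw [div_le_iff₀ (by positivity)]
  calc ‖c‖ * Real.exp ((p : ℝ) * j)
      ≤ S * j.factorial * Real.exp (-((p : ℝ) + 1) * j) * Real.exp ((p : ℝ) * j) := by gcongr
    _ = S * Real.exp (-(j : ℝ)) * j.factorial := by rw [← hexp]; ring

theorem tendsto_wsupNorm_sub_nhds_zero {α : Type*} {L : Filter α} {p : ℕ} {S : ℝ}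
    {f : α → ℕ → ℂ} {b : ℕ → ℂ} (hf : ∀ j, Tendsto (fun l => f l j) L (𝓝 (b j)))
    (hS : ∀ l j, ‖f l j - b j‖ ≤ S * j.factorial * Real.exp (-((p : ℝ) + 1) * j)) :
    Tendsto (fun l => wsupNorm p (fun j => f l j - b j)) L (𝓝 0) := by
  refine ENNReal.tendsto_iSup_nhds_zero_of_le
    (g := fun j => ENNReal.ofReal (S * Real.exp (-(j : ℝ)))) (fun j => ?_) ?_
    fun l j => ENNReal.ofReal_le_ofReal (norm_mul_exp_div_factorial_le (hS l j))
  · simpa using ENNReal.tendsto_ofReal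
      (((tendsto_sub_nhds_zero_iff.2 (hf j)).norm.mul_const _).div_const _)
  · rw [Nat.cofinite_eq_atTop]
    simpa using ENNReal.tendsto_ofReal
      ((Real.tendsto_exp_neg_atTop_nhds_zero.comp tendsto_natCast_atTop_atTop).const_mul S)

theorem weighted_compact_embedding_general
    (p : ℕ) (R : ℝ) (a : ℕ → ℕ → ℂ)
    (ha : ∀ l j : ℕ, ‖a l j‖ ≤ R * (j.factorial : ℝ) * Real.exp (-((p : ℝ) + 1) * j)) :
    ∃ φ : ℕ → ℕ, StrictMono φ ∧
      ∃ b : ℕ → ℂ,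
        (∀ j : ℕ, ‖b j‖ ≤ R * (j.factorial : ℝ) * Real.exp (-((p : ℝ) + 1) * j)) ∧
        Filter.Tendsto (fun l : ℕ => wsupNorm p (fun j => a (φ l) j - b j))
          Filter.atTop (nhds 0) := by
  obtain ⟨φ, hφ, b, hb, hconv⟩ := exists_strictMono_tendsto_of_forall_norm_le ha
  refine ⟨φ, hφ, b, hb, tendsto_wsupNorm_sub_nhds_zero (S := 2 * R) (tendsto_pi_nhds.1 hconv)
    fun l j => ?_⟩
  calc ‖a (φ l) j - b j‖ ≤ ‖a (φ l) j‖ + ‖b j‖ := norm_sub_le _ _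
    _ ≤ _ := add_le_add (ha (φ l) j) (hb j)
    _ = _ := by ring

/-- Any sequence of sequences `a^{(l)}` uniformly bounded by
`|a^{(l)}_j| ≤ R · j! · e^{−(p+1)·j}` has a subsequence converging, in the weighted
sup-norm `‖·‖_{∞,p}`, to a limit `a` satisfying the same bound. -/
theorem weighted_compact_embedding
    (p : ℕ) (R : ℝ) (hR : 0 < R) (a : ℕ → ℕ → ℂ)
    (ha : ∀ l j : ℕ, ‖a l j‖ ≤ R * (j.factorial : ℝ) * Real.exp (-((p : ℝ) + 1) * j)) :
    ∃ φ : ℕ → ℕ, StrictMono φ ∧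
      ∃ b : ℕ → ℂ,
        (∀ j : ℕ, ‖b j‖ ≤ R * (j.factorial : ℝ) * Real.exp (-((p : ℝ) + 1) * j)) ∧
        Filter.Tendsto (fun l : ℕ => wsupNorm p (fun j => a (φ l) j - b j))
          Filter.atTop (nhds 0) :=
  weighted_compact_embedding_general p R a ha
end
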